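/- arXiv:2505.10980 — 8 statements merged into one kernel-verified Lean document; each statement's English description precedes it below -/
import Mathlib

section
/- For every smooth function v : ℝ → ℝ, the following are equivalent: (i) for all j, m ∈ ℕ, t⁻¹ · d_{j,m}(t·v, 𝒮) → 0 as t → 0⁺; (ii) tsupport v ⊆ [0, ∞) or tsupport v ⊆ (−∞, 0]. That is, the adjacent cone of 𝒮 = 𝒮₊ ∪ 𝒮₋ at the zero function, computed with respect to the compact–open C^∞ seminorms, equals 𝒮₊ ∪ 𝒮₋ itself. -/
/-!
If `v` vanishes on one half-line, then every `t • v` already lies in `𝒮`, so all distances are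
zero. Otherwise pick `x₀ < 0 < x₁` with `v x₀ ≠ 0 ≠ v x₁`. Every `h ∈ 𝒮` vanishes at `x₀` or at
`x₁`, so already the `m = 0` seminorm gives `d_{j,0}(t • v, 𝒮) ≥ t · min |v x₀| |v x₁|` once
`[-j, j]` contains both points, and `t⁻¹ · d_{j,0}(t • v, 𝒮)` cannot tend to `0`.
-/

open Filter Topology Set

theorem tsupport_subset_Ici_iff {M : Type*} [Zero M] {f : ℝ → M} {a : ℝ} :
    tsupport f ⊆ Ici a ↔ ∀ x < a, f x = 0 := by
  rw [tsupport, isClosed_Ici.closure_subset_iff]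
  exact forall_congr' fun x => by rw [Function.mem_support, mem_Ici, not_imp_comm, not_le]

theorem tsupport_subset_Iic_iff {M : Type*} [Zero M] {f : ℝ → M} {a : ℝ} :
    tsupport f ⊆ Iic a ↔ ∀ x > a, f x = 0 := by
  rw [tsupport, isClosed_Iic.closure_subset_iff]
  exact forall_congr' fun x => by rw [Function.mem_support, mem_Iic, not_imp_comm, not_le]

def HalfLineSupported (f : ℝ → ℝ) : Prop :=
  tsupport f ⊆ Ici 0 ∨ tsupport f ⊆ Iic 0

def smoothHalfLineSupported : Set (ℝ → ℝ) :=
  {g | ContDiff ℝ (⊤ : ℕ∞) g ∧ HalfLineSupported g}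

/-- `d_{j,m}(f, S)`, the distance from `f` to `S` for the seminorm `sup_{[-j,j]} |·^(m)|`. -/
noncomputable def seminormInfDist (j m : ℕ) (S : Set (ℝ → ℝ)) (f : ℝ → ℝ) : ℝ :=
  ⨅ h : S, ⨆ x : Icc (-(j : ℝ)) j, |iteratedDeriv m (f - (h : ℝ → ℝ)) (x : ℝ)|

namespace HalfLineSupported

theorem zero : HalfLineSupported 0 :=
  Or.inl (by simp)

theorem smul {f : ℝ → ℝ} (hf : HalfLineSupported f) (c : ℝ) : HalfLineSupported (c • f) :=
  have hsub : tsupport (c • f) ⊆ tsupport f :=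
    closure_mono (Function.support_const_smul_subset c f)
  hf.imp hsub.trans hsub.trans

theorem eq_zero_or_eq_zero {f : ℝ → ℝ} (hf : HalfLineSupported f)
    {x₀ x₁ : ℝ} (hx₀ : x₀ < 0) (hx₁ : 0 < x₁) : f x₀ = 0 ∨ f x₁ = 0 :=
  hf.imp (fun h => tsupport_subset_Ici_iff.mp h x₀ hx₀)
    (fun h => tsupport_subset_Iic_iff.mp h x₁ hx₁)

end HalfLineSupported

theorem exists_ne_zero_of_not_halfLineSupported {f : ℝ → ℝ} (hf : ¬HalfLineSupported f) :
    ∃ x₀ x₁, x₀ < 0 ∧ 0 < x₁ ∧ f x₀ ≠ 0 ∧ f x₁ ≠ 0 := by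
  simp only [HalfLineSupported, tsupport_subset_Ici_iff, tsupport_subset_Iic_iff,
    not_or, not_forall] at hf
  obtain ⟨⟨x₀, hx₀, hfx₀⟩, ⟨x₁, hx₁, hfx₁⟩⟩ := hf
  exact ⟨x₀, x₁, hx₀, hx₁, hfx₀, hfx₁⟩

theorem abs_le_iSup_Icc {F : ℝ → ℝ} (hF : Continuous F) {a b x : ℝ} (hx : x ∈ Icc a b) :
    |F x| ≤ ⨆ y : Icc a b, |F y| :=
  le_ciSup (isCompact_range (hF.comp continuous_subtype_val).abs).bddAbove ⟨x, hx⟩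

section seminormInfDist

variable {j m : ℕ} {S : Set (ℝ → ℝ)} {f : ℝ → ℝ}

theorem seminormInfDist_nonneg : 0 ≤ seminormInfDist j m S f :=
  Real.iInf_nonneg fun _ => Real.iSup_nonneg fun _ => abs_nonneg _

theorem seminormInfDist_of_mem (hf : f ∈ S) : seminormInfDist j m S f = 0 := by
  refine le_antisymm ?_ seminormInfDist_nonneg
  refine ciInf_le_of_le ⟨0, ?_⟩ ⟨f, hf⟩ ?_
  · rintro _ ⟨h, rfl⟩
    exact Real.iSup_nonneg fun _ => abs_nonneg _
  · simp

theorem le_seminormInfDist_zero [Nonempty S] {c : ℝ}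
    (hS : ∀ h ∈ S, Continuous (f - h) ∧ ∃ x ∈ Icc (-(j : ℝ)) j, c ≤ |f x - h x|) :
    c ≤ seminormInfDist j 0 S f := by
  refine le_ciInf fun ⟨h, hh⟩ => ?_
  obtain ⟨hcont, x, hx, hc⟩ := hS h hh
  simpa only [iteratedDeriv_zero] using hc.trans (abs_le_iSup_Icc hcont hx)

end seminormInfDist

theorem mul_min_le_seminormInfDist_smul {v : ℝ → ℝ} (hv : Continuous v) {j : ℕ} {x₀ x₁ : ℝ}
    (hx₀ : x₀ ∈ Icc (-(j : ℝ)) j) (hx₁ : x₁ ∈ Icc (-(j : ℝ)) j) (hx₀_neg : x₀ < 0)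
    (hx₁_pos : 0 < x₁) {t : ℝ} (ht : 0 < t) :
    t * min |v x₀| |v x₁| ≤ seminormInfDist j 0 smoothHalfLineSupported (t • v) := by
  have : Nonempty smoothHalfLineSupported := ⟨⟨0, contDiff_const, HalfLineSupported.zero⟩⟩
  refine le_seminormInfDist_zero fun h ⟨hh_smooth, hh_supp⟩ =>
    ⟨(hv.const_smul t).sub hh_smooth.continuous, ?_⟩
  rcases hh_supp.eq_zero_or_eq_zero hx₀_neg hx₁_pos with h0 | h0
  · refine ⟨x₀, hx₀, ?_⟩
    simpa [h0, abs_mul, abs_of_pos ht] using mul_le_mul_of_nonneg_left (min_le_left _ _) ht.le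
  · refine ⟨x₁, hx₁, ?_⟩
    simpa [h0, abs_mul, abs_of_pos ht] using mul_le_mul_of_nonneg_left (min_le_right _ _) ht.le

/-- The adjacent cone at the zero function of `𝒮 = 𝒮₊ ∪ 𝒮₋` (smooth functions supported in
`[0, ∞)`, resp. `(-∞, 0]`), computed with respect to the compact–open `C^∞` seminorms
`‖f‖_{j,m} = sup_{x ∈ [-j,j]} |f^(m)(x)|`, equals `𝒮₊ ∪ 𝒮₋` itself. -/
theorem stmt_3 (v : ℝ → ℝ) (hv : ContDiff ℝ (⊤ : ℕ∞) v) :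
    (∀ j m : ℕ, Tendsto
        (fun t : ℝ =>
          t⁻¹ * ⨅ h : {g : ℝ → ℝ | ContDiff ℝ (⊤ : ℕ∞) g ∧
              (tsupport g ⊆ Set.Ici (0 : ℝ) ∨ tsupport g ⊆ Set.Iic (0 : ℝ))},
            ⨆ x : Set.Icc (-(j : ℝ)) (j : ℝ),
              |iteratedDeriv m (t • v - (h : ℝ → ℝ)) (x : ℝ)|)
        (𝓝[>] (0 : ℝ)) (𝓝 0)) ↔
    (tsupport v ⊆ Set.Ici (0 : ℝ) ∨ tsupport v ⊆ Set.Iic (0 : ℝ)) := by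
  change (∀ j m : ℕ, Tendsto (fun t => t⁻¹ * seminormInfDist j m smoothHalfLineSupported (t • v))
    (𝓝[>] 0) (𝓝 0)) ↔ HalfLineSupported v
  refine ⟨fun H => ?_, fun hsupp j m => ?_⟩
  · by_contra hcon
    obtain ⟨x₀, x₁, hx₀, hx₁, hvx₀, hvx₁⟩ := exists_ne_zero_of_not_halfLineSupported hcon
    obtain ⟨j, hj⟩ := exists_nat_ge (max |x₀| |x₁|)
    have hmem : ∀ x, |x| ≤ max |x₀| |x₁| → x ∈ Icc (-(j : ℝ)) j := fun x hx =>
      abs_le.mp (hx.trans hj)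
    have hbound : ∀ᶠ t in 𝓝[>] 0,
        min |v x₀| |v x₁| ≤ t⁻¹ * seminormInfDist j 0 smoothHalfLineSupported (t • v) := by
      filter_upwards [self_mem_nhdsWithin] with t (ht : 0 < t)
      rw [le_inv_mul_iff₀ ht]
      exact mul_min_le_seminormInfDist_smul hv.continuous (hmem _ (le_max_left _ _))
        (hmem _ (le_max_right _ _)) hx₀ hx₁ ht
    have hpos : 0 < min |v x₀| |v x₁| := lt_min (abs_pos.2 hvx₀) (abs_pos.2 hvx₁)
    exact hpos.not_ge (ge_of_tendsto (H j 0) hbound)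
  · have hmem (t : ℝ) : t • v ∈ smoothHalfLineSupported := ⟨hv.const_smul t, hsupp.smul t⟩
    simpa only [seminormInfDist_of_mem (hmem _), mul_zero] using tendsto_const_nhds
end

section
/- Let f ∈ 𝒮₊ with f not identically zero. Then for every smooth function v : ℝ → ℝ, the following are equivalent: (i) for all j, m ∈ ℕ, t⁻¹ · d_{j,m}(f + t·v, 𝒮) → 0 as t → 0⁺, where d_{j,m}(f + t·v, 𝒮) = inf { sup_{x ∈ [−j,j]} |iteratedDeriv m (f + t·v − h) x| : h ∈ 𝒮 } is the pseudo-distance from the point f + t·v to the set 𝒮; (ii) tsupport v ⊆ [0, ∞). That is, at every nonzero f ∈ 𝒮₊ the adjacent cone of 𝒮 equals { v smooth : tsupport v ⊆ [0, ∞) }. -/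
open Filter Topology Set

private lemma bdd_aux {w : ℝ → ℝ} (hw : ContDiff ℝ (⊤ : ℕ∞) w) (m j : ℕ) :
    BddAbove (Set.range fun x : Set.Icc (-(j : ℝ)) (j : ℝ) =>
      |iteratedDeriv m w (x : ℝ)|) := by
  have hc : Continuous fun x : ℝ => |iteratedDeriv m w x| :=
    (hw.continuous_iteratedDeriv m (by exact_mod_cast le_top)).abs
  have : (Set.range fun x : Set.Icc (-(j : ℝ)) (j : ℝ) => |iteratedDeriv m w (x : ℝ)|)
      = (fun x : ℝ => |iteratedDeriv m w x|) '' Set.Icc (-(j : ℝ)) (j : ℝ) := by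
    ext y; simp [Set.mem_image, Subtype.exists]
  rw [this]
  exact (isCompact_Icc.image hc).bddAbove

private lemma iter_zero_fun (m : ℕ) : iteratedDeriv m (0 : ℝ → ℝ) = 0 := by
  induction m with
  | zero => simp [iteratedDeriv_zero]
  | succ n ih =>
    rw [iteratedDeriv_succ, ih]
    ext x
    simp only [Pi.zero_apply]
    exact deriv_const x 0

private lemma sup_nonneg_aux {w : ℝ → ℝ} (hw : ContDiff ℝ (⊤ : ℕ∞) w) (m j : ℕ) :
    0 ≤ ⨆ x : Set.Icc (-(j : ℝ)) (j : ℝ), |iteratedDeriv m w (x : ℝ)| := by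
  have hne : (Set.Icc (-(j : ℝ)) (j : ℝ)).Nonempty := ⟨0, by constructor <;> simp⟩
  obtain ⟨x, hx⟩ := hne
  exact le_trans (abs_nonneg _) (le_ciSup (bdd_aux hw m j) ⟨x, hx⟩)

/-- At a nonzero point `f ∈ 𝒮₊` (a smooth function, not identically zero, with support in
`[0, ∞)`), the adjacent cone of `𝒮 = 𝒮₊ ∪ 𝒮₋`, computed with respect to the compact–open `C^∞`
seminorms, equals `{ v smooth : tsupport v ⊆ [0, ∞) }`. -/
theorem stmt_4 (f : ℝ → ℝ) (hf : ContDiff ℝ (⊤ : ℕ∞) f)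
    (hfsupp : tsupport f ⊆ Set.Ici (0 : ℝ)) (hfne : f ≠ 0)
    (v : ℝ → ℝ) (hv : ContDiff ℝ (⊤ : ℕ∞) v) :
    (∀ j m : ℕ, Tendsto
        (fun t : ℝ =>
          t⁻¹ * ⨅ h : {g : ℝ → ℝ | ContDiff ℝ (⊤ : ℕ∞) g ∧
              (tsupport g ⊆ Set.Ici (0 : ℝ) ∨ tsupport g ⊆ Set.Iic (0 : ℝ))},
            ⨆ x : Set.Icc (-(j : ℝ)) (j : ℝ),
              |iteratedDeriv m (f + t • v - (h : ℝ → ℝ)) (x : ℝ)|)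
        (𝓝[>] (0 : ℝ)) (𝓝 0)) ↔
    tsupport v ⊆ Set.Ici (0 : ℝ) := by
  haveI hne : Nonempty {g : ℝ → ℝ | ContDiff ℝ (⊤ : ℕ∞) g ∧
      (tsupport g ⊆ Set.Ici (0 : ℝ) ∨ tsupport g ⊆ Set.Iic (0 : ℝ))} :=
    ⟨⟨(0 : ℝ → ℝ), contDiff_zero_fun, Or.inl (by
        simp only [tsupport, Function.support_zero, closure_empty]
        exact Set.empty_subset _)⟩⟩
  constructor
  · intro H
    by_contra hsupp
    -- get a < 0 with v a ≠ 0
    obtain ⟨x₀, hx₀s, hx₀⟩ : ∃ x, x ∈ tsupport v ∧ x ∉ Set.Ici (0 : ℝ) := by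
      by_contra h; push_neg at h; exact hsupp fun x hx => h x hx
    have hx₀lt : x₀ < 0 := lt_of_not_ge (by simpa using hx₀)
    obtain ⟨a, has, halt⟩ : ∃ a, a ∈ Function.support v ∧ a < 0 := by
      have := mem_closure_iff.1 hx₀s (Set.Iio 0) isOpen_Iio hx₀lt
      obtain ⟨a, ha1, ha2⟩ := this
      exact ⟨a, ha2, ha1⟩
    have hva : v a ≠ 0 := has
    -- get b > 0 with f b ≠ 0
    obtain ⟨b, hfb⟩ : ∃ b, f b ≠ 0 := Function.ne_iff.1 hfne
    have hbmem : b ∈ tsupport f := subset_closure hfb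
    have hb0 : 0 ≤ b := hfsupp hbmem
    have hf0 : f 0 = 0 := by
      have h1 : Tendsto f (𝓝[<] (0:ℝ)) (𝓝 (f 0)) :=
        (hf.continuous.tendsto 0).mono_left nhdsWithin_le_nhds
      have h2 : Tendsto f (𝓝[<] (0:ℝ)) (𝓝 0) := by
        apply Tendsto.congr' _ tendsto_const_nhds
        filter_upwards [self_mem_nhdsWithin] with x hx
        exact (image_eq_zero_of_notMem_tsupport fun hm => absurd (hfsupp hm) (Set.notMem_Ici.mpr hx)).symm
      exact tendsto_nhds_unique h1 h2
    have hbpos : 0 < b := lt_of_le_of_ne hb0 (by rintro rfl; exact hfb hf0)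
    have hfa : f a = 0 :=
      image_eq_zero_of_notMem_tsupport fun hm => absurd (hfsupp hm) (Set.notMem_Ici.mpr halt)
    -- choose j
    set j : ℕ := ⌈max (-a) b⌉₊ with hj
    have haj : a ∈ Set.Icc (-(j : ℝ)) (j : ℝ) := by
      constructor
      · have : -a ≤ (j : ℝ) := le_trans (le_max_left _ _) (Nat.le_ceil _)
        linarith
      · linarith [(le_of_lt halt), (Nat.cast_nonneg j : (0:ℝ) ≤ j)]
    have hbj : b ∈ Set.Icc (-(j : ℝ)) (j : ℝ) := by
      have : b ≤ (j : ℝ) := le_trans (le_max_right _ _) (Nat.le_ceil _)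
      constructor
      · linarith [(le_of_lt hbpos), (Nat.cast_nonneg j : (0:ℝ) ≤ j)]
      · exact this
    have Htend := H j 0
    -- eventually the quantity is ≥ |v a|
    have hlb : ∀ᶠ t in 𝓝[>] (0:ℝ),
        |v a| ≤ t⁻¹ * ⨅ h : {g : ℝ → ℝ | ContDiff ℝ (⊤ : ℕ∞) g ∧
              (tsupport g ⊆ Set.Ici (0 : ℝ) ∨ tsupport g ⊆ Set.Iic (0 : ℝ))},
            ⨆ x : Set.Icc (-(j : ℝ)) (j : ℝ),
              |iteratedDeriv 0 (f + t • v - (h : ℝ → ℝ)) (x : ℝ)| := by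
      have hsm : ∀ᶠ t in 𝓝[>] (0:ℝ), t * |v b| ≤ |f b| / 2 ∧ t * |v a| ≤ |f b| / 2 ∧ 0 < t := by
        have h1 : Tendsto (fun t : ℝ => t * |v b|) (𝓝[>] (0:ℝ)) (𝓝 0) := by
          have h0 : Tendsto (fun t : ℝ => t * |v b|) (𝓝 (0:ℝ)) (𝓝 (0 * |v b|)) :=
            (continuous_id.mul continuous_const).tendsto 0
          simpa using h0.mono_left nhdsWithin_le_nhds
        have h2 : Tendsto (fun t : ℝ => t * |v a|) (𝓝[>] (0:ℝ)) (𝓝 0) := by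
          have h0 : Tendsto (fun t : ℝ => t * |v a|) (𝓝 (0:ℝ)) (𝓝 (0 * |v a|)) :=
            (continuous_id.mul continuous_const).tendsto 0
          simpa using h0.mono_left nhdsWithin_le_nhds
        have hfb2 : 0 < |f b| / 2 := by positivity
        filter_upwards [h1.eventually_le_const hfb2, h2.eventually_le_const hfb2,
          self_mem_nhdsWithin] with t ht1 ht2 ht3
        exact ⟨ht1, ht2, ht3⟩
      filter_upwards [hsm] with t ⟨ht1, ht2, htpos⟩
      have key : t * |v a| ≤ ⨅ h : {g : ℝ → ℝ | ContDiff ℝ (⊤ : ℕ∞) g ∧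
              (tsupport g ⊆ Set.Ici (0 : ℝ) ∨ tsupport g ⊆ Set.Iic (0 : ℝ))},
            ⨆ x : Set.Icc (-(j : ℝ)) (j : ℝ),
              |iteratedDeriv 0 (f + t • v - (h : ℝ → ℝ)) (x : ℝ)| := by
        apply le_ciInf
        rintro ⟨h, hhsm, hhsupp⟩
        have hw : ContDiff ℝ (⊤ : ℕ∞) (f + t • v - h) :=
          (hf.add (hv.const_smul t)).sub hhsm
        have hbd := bdd_aux hw 0 j
        rcases hhsupp with hhs | hhs
        · have hha : h a = 0 :=
            image_eq_zero_of_notMem_tsupport fun hm => absurd (hhs hm) (Set.notMem_Ici.mpr halt)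
          have hval : |iteratedDeriv 0 (f + t • v - h) a| = t * |v a| := by
            simp [iteratedDeriv_zero, Pi.add_apply, Pi.sub_apply, Pi.smul_apply, hfa, hha,
              abs_mul, abs_of_pos htpos, smul_eq_mul]
          calc t * |v a| = |iteratedDeriv 0 (f + t • v - h) a| := hval.symm
            _ ≤ _ := le_ciSup hbd ⟨a, haj⟩
        · have hhb : h b = 0 :=
            image_eq_zero_of_notMem_tsupport fun hm => absurd (hhs hm) (Set.notMem_Iic.mpr hbpos)
          have hval : |f b| - t * |v b| ≤ |iteratedDeriv 0 (f + t • v - h) b| := by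
            simp only [iteratedDeriv_zero, Pi.add_apply, Pi.sub_apply, Pi.smul_apply, hhb,
              smul_eq_mul, sub_zero]
            have := abs_add_le (f b + t * v b) (-(t * v b))
            simp only [add_neg_cancel_right, abs_neg, abs_mul, abs_of_pos htpos] at this
            linarith
          calc t * |v a| ≤ |f b| / 2 := ht2
            _ ≤ |f b| - t * |v b| := by linarith
            _ ≤ |iteratedDeriv 0 (f + t • v - h) b| := hval
            _ ≤ _ := le_ciSup hbd ⟨b, hbj⟩
      calc |v a| = t⁻¹ * (t * |v a|) := by field_simp
        _ ≤ _ := by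
            apply mul_le_mul_of_nonneg_left key (le_of_lt (inv_pos.2 htpos))
    have hev := Htend.eventually (eventually_lt_nhds (show (0:ℝ) < |v a| by positivity))
    obtain ⟨t, hlt, hge⟩ := (hev.and hlb).exists
    exact absurd hge (not_le.2 hlt)
  · intro hvs j m
    have hzero : ∀ t : ℝ,
        (⨅ h : {g : ℝ → ℝ | ContDiff ℝ (⊤ : ℕ∞) g ∧
              (tsupport g ⊆ Set.Ici (0 : ℝ) ∨ tsupport g ⊆ Set.Iic (0 : ℝ))},
            ⨆ x : Set.Icc (-(j : ℝ)) (j : ℝ),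
              |iteratedDeriv m (f + t • v - (h : ℝ → ℝ)) (x : ℝ)|) = 0 := by
      intro t
      have hmem : (f + t • v) ∈ {g : ℝ → ℝ | ContDiff ℝ (⊤ : ℕ∞) g ∧
          (tsupport g ⊆ Set.Ici (0 : ℝ) ∨ tsupport g ⊆ Set.Iic (0 : ℝ))} := by
        refine ⟨hf.add (hv.const_smul t), Or.inl ?_⟩
        apply closure_minimal _ isClosed_Ici
        intro x hx
        by_contra hxn
        have hfx : f x = 0 :=
          image_eq_zero_of_notMem_tsupport fun hm => hxn (hfsupp hm)
        have hvx : v x = 0 :=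
          image_eq_zero_of_notMem_tsupport fun hm => hxn (hvs hm)
        simp [Function.mem_support, Pi.add_apply, Pi.smul_apply, hfx, hvx] at hx
      apply le_antisymm
      · have : (⨆ x : Set.Icc (-(j : ℝ)) (j : ℝ),
            |iteratedDeriv m (f + t • v - ((⟨f + t • v, hmem⟩ :
              {g : ℝ → ℝ | ContDiff ℝ (⊤ : ℕ∞) g ∧
              (tsupport g ⊆ Set.Ici (0 : ℝ) ∨ tsupport g ⊆ Set.Iic (0 : ℝ))}) : ℝ → ℝ)) (x : ℝ)|) = 0 := by
          rw [show ((f + t • v - (f + t • v)) : ℝ → ℝ) = 0 by simp, iter_zero_fun]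
          simp
        calc _ ≤ _ := ciInf_le ⟨(0:ℝ), by
              rintro y ⟨⟨h, hhsm, hhsupp⟩, rfl⟩
              exact sup_nonneg_aux ((hf.add (hv.const_smul t)).sub hhsm) m j⟩
              (⟨f + t • v, hmem⟩ : {g : ℝ → ℝ | ContDiff ℝ (⊤ : ℕ∞) g ∧
              (tsupport g ⊆ Set.Ici (0 : ℝ) ∨ tsupport g ⊆ Set.Iic (0 : ℝ))})
          _ = 0 := this
      · apply le_ciInf
        rintro ⟨h, hhsm, hhsupp⟩
        exact sup_nonneg_aux ((hf.add (hv.const_smul t)).sub hhsm) m j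
    have : (fun t : ℝ =>
        t⁻¹ * ⨅ h : {g : ℝ → ℝ | ContDiff ℝ (⊤ : ℕ∞) g ∧
              (tsupport g ⊆ Set.Ici (0 : ℝ) ∨ tsupport g ⊆ Set.Iic (0 : ℝ))},
            ⨆ x : Set.Icc (-(j : ℝ)) (j : ℝ),
              |iteratedDeriv m (f + t • v - (h : ℝ → ℝ)) (x : ℝ)|) = fun _ => 0 := by
      funext t; rw [hzero t]; ring
    rw [this]
    exact tendsto_const_nhds
end

section
/- Let E and F be real Banach spaces, U ⊆ E open, and φ : U → F a map of class C¹ on U. Let S ⊆ U, s ∈ S, and v ∈ E. If v is adjacent tangent to S at s, i.e. t⁻¹ · dist(s + t·v, S) → 0 as t → 0⁺, then Dφ(s)v (the Fréchet derivative of φ at s applied to v) is adjacent tangent to the image φ(S) at φ(s), i.e. t⁻¹ · dist(φ(s) + t·Dφ(s)v, φ(S)) → 0 as t → 0⁺. (This is the chart-independence of the adjacent cone under C¹ changes of coordinates.) -/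
/-!
Near `s`, `φ` is Lipschitz with some constant `K`, so the distance from `φ (s + t • v)` to `φ '' S`
is at most `K` times the distance from `s + t • v` to `S` (nearest points of `S` stay in the
Lipschitz neighbourhood for small `t`), which is `o(t)`. Differentiability at `s` says that
`φ (s + t • v)` differs from `φ s + t • Dφ(s) v` by `o(t)`.
-/

open Filter Topology Set Metric Asymptotics

theorem LipschitzOnWith.infDist_image_le {α β : Type*} [PseudoMetricSpace α]
    [PseudoMetricSpace β] {φ : α → β} {K : NNReal} {V T : Set α} {x : α}
    (hφ : LipschitzOnWith K φ V) (hx : x ∈ V) (hT : T ⊆ V) :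
    infDist (φ x) (φ '' T) ≤ K * infDist x T := by
  rcases T.eq_empty_or_nonempty with rfl | hTne
  · simp
  have : Nonempty T := hTne.to_subtype
  rw [infDist_eq_iInf (x := x), Real.mul_iInf_of_nonneg K.coe_nonneg]
  refine le_ciInf fun ⟨y, hy⟩ => ?_
  calc infDist (φ x) (φ '' T)
      ≤ dist (φ x) (φ y) := infDist_le_dist_of_mem (mem_image_of_mem φ hy)
    _ ≤ K * dist x y := hφ.dist_le_mul x hx y (hT hy)

theorem Metric.infDist_inter_ball_eq {α : Type*} [PseudoMetricSpace α] {S : Set α} {c x : α}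
    {R : ℝ} (hc : c ∈ S) (hx : 2 * dist x c < R) :
    infDist x (S ∩ ball c R) = infDist x S := by
  have hcB : c ∈ S ∩ ball c R :=
    ⟨hc, mem_ball_self (by linarith [dist_nonneg (x := x) (y := c)])⟩
  refine le_antisymm (not_lt.1 fun hlt => ?_)
    (infDist_le_infDist_of_subset inter_subset_left ⟨c, hcB⟩)
  obtain ⟨y, hyS, hxy⟩ := (infDist_lt_iff ⟨c, hc⟩).1 hlt
  have hxy_c : dist x y < dist x c := hxy.trans_le (infDist_le_dist_of_mem hcB)
  have hyB : y ∈ ball c R := by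
    rw [mem_ball]
    linarith [dist_triangle_left y c x]
  exact (infDist_le_dist_of_mem (show y ∈ S ∩ ball c R from ⟨hyS, hyB⟩)).not_gt hxy

theorem tendsto_inv_mul_nhdsGT_zero_iff_isLittleO {f : ℝ → ℝ} :
    Tendsto (fun t : ℝ => t⁻¹ * f t) (𝓝[>] 0) (𝓝 0) ↔ f =o[𝓝[>] 0] id := by
  have hf : ∀ᶠ t in 𝓝[>] (0 : ℝ), id t = 0 → f t = 0 :=
    eventually_nhdsWithin_of_forall fun t ht h => absurd h (ne_of_gt ht)
  rw [isLittleO_iff_tendsto' hf]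
  simp only [id, inv_mul_eq_div]

section

variable {E F : Type*} [NormedAddCommGroup E] [NormedSpace ℝ E] [NormedAddCommGroup F]
  [NormedSpace ℝ F]

def IsAdjacentTangent (S : Set E) (s v : E) : Prop :=
  Tendsto (fun t : ℝ => t⁻¹ * infDist (s + t • v) S) (𝓝[>] 0) (𝓝 0)

theorem isAdjacentTangent_iff_isLittleO {S : Set E} {s v : E} :
    IsAdjacentTangent S s v ↔ (fun t : ℝ => infDist (s + t • v) S) =o[𝓝[>] 0] id :=
  tendsto_inv_mul_nhdsGT_zero_iff_isLittleO

theorem HasFDerivAt.isLittleO_along {φ : E → F} {D : E →L[ℝ] F} {s : E}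
    (hφ : HasFDerivAt φ D s) (v : E) : (fun t : ℝ => φ (s + t • v) - φ s - t • D v) =o[𝓝 0] id := by
  have hline : HasDerivAt (fun t : ℝ => s + t • v) v 0 := by
    simpa using ((hasDerivAt_id (0 : ℝ)).smul_const v).const_add s
  have hcomp : HasDerivAt (fun t : ℝ => φ (s + t • v)) (D v) 0 :=
    (by simpa using hφ : HasFDerivAt φ D (s + (0 : ℝ) • v)).comp_hasDerivAt 0 hline
  have h := hasDerivAt_iff_isLittleO.1 hcomp
  simp only [zero_smul, add_zero, sub_zero] at h
  exact h

theorem eventually_infDist_image_le {φ : E → F} {D : E →L[ℝ] F} {S V : Set E} {s : E}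
    {K : NNReal} (hs : s ∈ S) (hV : V ∈ 𝓝 s) (hK : LipschitzOnWith K φ V) (v : E) :
    ∀ᶠ t : ℝ in 𝓝 0, infDist (φ s + t • D v) (φ '' S)
      ≤ ‖φ (s + t • v) - φ s - t • D v‖ + K * infDist (s + t • v) S := by
  obtain ⟨r, hr, hrV⟩ := Metric.mem_nhds_iff.1 hV
  have hline : Tendsto (fun t : ℝ => s + t • v) (𝓝 0) (𝓝 s) := by
    simpa using tendsto_const_nhds.add ((tendsto_id (x := 𝓝 (0 : ℝ))).smul_const v)
  filter_upwards [hline (ball_mem_nhds s (half_pos hr))] with t ht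
  rw [mem_preimage, mem_ball] at ht
  set x := s + t • v
  have hx : x ∈ ball s r := mem_ball.2 (by linarith [dist_nonneg (x := x) (y := s)])
  calc infDist (φ s + t • D v) (φ '' S)
      ≤ infDist (φ x) (φ '' S) + dist (φ s + t • D v) (φ x) := infDist_le_infDist_add_dist
    _ ≤ infDist (φ x) (φ '' (S ∩ ball s r)) + ‖φ x - φ s - t • D v‖ := by
        gcongr ?_ + ?_
        · exact infDist_le_infDist_of_subset (image_mono inter_subset_left)
            ⟨φ s, s, ⟨hs, mem_ball_self hr⟩, rfl⟩
        · rw [dist_comm, dist_eq_norm, sub_sub]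
    _ ≤ K * infDist x (S ∩ ball s r) + ‖φ x - φ s - t • D v‖ := by
        gcongr
        exact (hK.mono hrV).infDist_image_le hx inter_subset_right
    _ = ‖φ x - φ s - t • D v‖ + K * infDist x S := by
        rw [infDist_inter_ball_eq hs (by linarith), add_comm]

theorem IsAdjacentTangent.image {φ : E → F} {D : E →L[ℝ] F} {S V : Set E} {s v : E}
    {K : NNReal} (hv : IsAdjacentTangent S s v) (hs : s ∈ S) (hφ : HasFDerivAt φ D s)
    (hV : V ∈ 𝓝 s) (hK : LipschitzOnWith K φ V) :
    IsAdjacentTangent (φ '' S) (φ s) (D v) := by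
  rw [isAdjacentTangent_iff_isLittleO] at hv ⊢
  have hbound : (fun t : ℝ => ‖φ (s + t • v) - φ s - t • D v‖ + K * infDist (s + t • v) S)
      =o[𝓝[>] 0] id :=
    ((hφ.isLittleO_along v).mono nhdsWithin_le_nhds).norm_left.add (hv.const_mul_left K)
  refine IsBigO.trans_isLittleO (IsBigO.of_bound' ?_) hbound
  filter_upwards [nhdsWithin_le_nhds (eventually_infDist_image_le hs hV hK v)] with t ht
  rw [Real.norm_of_nonneg infDist_nonneg]
  exact ht.trans (Real.le_norm_self _)

end

theorem stmt_5_general {E F : Type*} [NormedAddCommGroup E] [NormedSpace ℝ E]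
    [NormedAddCommGroup F] [NormedSpace ℝ F]
    (U : Set E) (hU : IsOpen U) (φ : E → F) (hφ : ContDiffOn ℝ 1 φ U)
    (S : Set E) (hSU : S ⊆ U) (s : E) (hs : s ∈ S) (v : E)
    (hv : Tendsto (fun t : ℝ => t⁻¹ * Metric.infDist (s + t • v) S)
      (𝓝[>] (0 : ℝ)) (𝓝 0)) :
    Tendsto (fun t : ℝ => t⁻¹ * Metric.infDist (φ s + t • fderiv ℝ φ s v) (φ '' S))
      (𝓝[>] (0 : ℝ)) (𝓝 0) := by
  have hφs : ContDiffAt ℝ 1 φ s := hφ.contDiffAt (hU.mem_nhds (hSU hs))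
  obtain ⟨K, V, hV, hK⟩ := hφs.exists_lipschitzOnWith
  exact IsAdjacentTangent.image hv hs (hφs.differentiableAt one_ne_zero).hasFDerivAt hV hK

/-- Chart-independence of the adjacent cone under `C¹` changes of coordinates: if `φ` is `C¹` on
an open set `U`, `S ⊆ U`, `s ∈ S`, and `v` is adjacent tangent to `S` at `s`, then `Dφ(s)v` is
adjacent tangent to `φ(S)` at `φ(s)`. -/
theorem stmt_5 {E F : Type*} [NormedAddCommGroup E] [NormedSpace ℝ E] [CompleteSpace E]
    [NormedAddCommGroup F] [NormedSpace ℝ F] [CompleteSpace F]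
    (U : Set E) (hU : IsOpen U) (φ : E → F) (hφ : ContDiffOn ℝ 1 φ U)
    (S : Set E) (hSU : S ⊆ U) (s : E) (hs : s ∈ S) (v : E)
    (hv : Tendsto (fun t : ℝ => t⁻¹ * Metric.infDist (s + t • v) S)
      (𝓝[>] (0 : ℝ)) (𝓝 0)) :
    Tendsto (fun t : ℝ => t⁻¹ * Metric.infDist (φ s + t • fderiv ℝ φ s v) (φ '' S))
      (𝓝[>] (0 : ℝ)) (𝓝 0) :=
  stmt_5_general U hU φ hφ S hSU s hs v hv
end

section
/- Let E and F be real Banach spaces, U ⊆ E open, and φ : U → F a map of class C² on U. Let S ⊆ U, s ∈ S, and v, w ∈ E. If w is second-order adjacent tangent to S at s with associated direction v, i.e. t⁻² · dist(s + t·v + (t²/2)·w, S) → 0 as t → 0⁺, then D²φ(s)(v, v) + Dφ(s)w is second-order adjacent tangent to φ(S) at φ(s) with associated direction Dφ(s)v, i.e. t⁻² · dist(φ(s) + t·Dφ(s)v + (t²/2)·(D²φ(s)(v, v) + Dφ(s)w), φ(S)) → 0 as t → 0⁺. (This is the chart-independence of the second-order adjacent cone under C² changes of coordinates.) -/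
/-!
Pick points `γ t ∈ S` within `o(t²)` of `s + t • v + (t² / 2) • w`. By the second-order Taylor
expansion of `φ` at `s`, the points `φ (γ t) ∈ φ '' S` lie within `o(t²)` of
`φ s + t • Dφ(s) v + (t² / 2) • (D²φ(s)(v, v) + Dφ(s) w)`: the first-order term absorbs `Dφ(s) w`,
and the quadratic term differs from `t² • D²φ(s)(v, v)` by `o(t²)` because `γ t - s = t • v + o(t)`.
-/

open Filter Topology Set Asymptotics Metric

section

variable {E : Type*} [SeminormedAddCommGroup E]

theorem exists_mem_isLittleO_sub_of_tendsto_infDist {c : ℝ → E} {S : Set E} (hS : S.Nonempty)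
    (h : Tendsto (fun t => (t ^ 2)⁻¹ * infDist (c t) S) (𝓝[>] 0) (𝓝 0)) :
    ∃ γ : ℝ → E, (∀ t > 0, γ t ∈ S) ∧ (fun t => γ t - c t) =o[𝓝[>] 0] fun t => t ^ 2 := by
  -- `infDist` need not be attained; the slack `t ^ 3` is `o(t²)`.
  have hnear : ∀ t > (0 : ℝ), ∃ y ∈ S, dist (c t) y < infDist (c t) S + t ^ 3 :=
    fun t ht => (infDist_lt_iff hS).1 (lt_add_of_pos_right _ (by positivity))
  choose! γ hγS hγ using hnear
  refine ⟨γ, hγS, ?_⟩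
  have hsq_ne : ∀ᶠ t in 𝓝[>] (0 : ℝ), t ^ 2 = 0 → ‖γ t - c t‖ = 0 :=
    eventually_mem_nhdsWithin.mono fun t (ht : 0 < t) h => absurd h (by positivity)
  rw [← isLittleO_norm_left, isLittleO_iff_tendsto' hsq_ne]
  have hbound : Tendsto (fun t => (t ^ 2)⁻¹ * infDist (c t) S + t) (𝓝[>] 0) (𝓝 0) := by
    simpa using h.add (tendsto_id.mono_left nhdsWithin_le_nhds)
  refine squeeze_zero' (.of_forall fun t => by positivity) ?_ hbound
  filter_upwards [self_mem_nhdsWithin] with t (ht : 0 < t)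
  have hdist := hγ t ht
  rw [dist_comm, dist_eq_norm] at hdist
  rw [div_le_iff₀ (by positivity), add_mul, mul_right_comm, inv_mul_cancel₀ (by positivity),
    one_mul]
  linarith [show t * t ^ 2 = t ^ 3 by ring]

theorem tendsto_inv_sq_mul_infDist_of_isLittleO {c γ : ℝ → E} {S : Set E}
    (hγS : ∀ t > 0, γ t ∈ S) (hγ : (fun t => γ t - c t) =o[𝓝[>] 0] fun t => t ^ 2) :
    Tendsto (fun t => (t ^ 2)⁻¹ * infDist (c t) S) (𝓝[>] 0) (𝓝 0) := by
  refine squeeze_zero' (.of_forall fun t => mul_nonneg (by positivity) infDist_nonneg) ?_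
    hγ.norm_left.tendsto_div_nhds_zero
  filter_upwards [self_mem_nhdsWithin] with t (ht : 0 < t)
  rw [div_eq_inv_mul, ← dist_eq_norm, dist_comm]
  gcongr
  exact infDist_le_dist_of_mem (hγS t ht)

end

section

variable {E F : Type*} [NormedAddCommGroup E] [NormedSpace ℝ E]
  [NormedAddCommGroup F] [NormedSpace ℝ F]

theorem ContDiffAt.isLittleO_sub_taylor_two {φ : E → F} {x : E} (hφ : ContDiffAt ℝ 2 φ x) :
    (fun y => φ y - φ x - fderiv ℝ φ x (y - x)
      - (2 : ℝ)⁻¹ • fderiv ℝ (fderiv ℝ φ) x (y - x) (y - x)) =o[𝓝 x] fun y => ‖y - x‖ ^ 2 := by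
  set B := fderiv ℝ (fderiv ℝ φ) x
  obtain ⟨r, hr, hdiff⟩ : ∃ r > 0, ∀ y ∈ ball x r, DifferentiableAt ℝ φ y :=
    Metric.eventually_nhds_iff_ball.1 <|
      (hφ.eventually (by simp)).mono fun y hy => hy.differentiableAt (by simp)
  have hB : HasFDerivAt (fderiv ℝ φ) B x :=
    ((hφ.fderiv_right (m := 1) le_rfl).differentiableAt one_ne_zero).hasFDerivAt
  have hsymm : IsSymmSndFDerivAt ℝ φ x := hφ.isSymmSndFDerivAt (by simp)
  have hderiv : ∀ y ∈ ball x r, HasFDerivWithinAt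
      (fun y => φ y - φ x - fderiv ℝ φ x (y - x) - (2 : ℝ)⁻¹ • B (y - x) (y - x))
      (fderiv ℝ φ y - fderiv ℝ φ x - B (y - x)) (ball x r) y := by
    -- The symmetry of `B` turns the derivative `½ (B (y - x) · + B · (y - x))` into `B (y - x)`.
    intro y hy
    have hsub : HasFDerivAt (fun y => y - x) (ContinuousLinearMap.id ℝ E) y :=
      (hasFDerivAt_id y).sub_const x
    refine HasFDerivAt.hasFDerivWithinAt ?_
    refine ((((hdiff y hy).hasFDerivAt.sub_const (φ x)).sub
      ((fderiv ℝ φ x).hasFDerivAt.comp y hsub)).sub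
      ((B.hasFDerivAt_of_bilinear hsub hsub).const_smul (2 : ℝ)⁻¹)).congr_fderiv ?_
    ext h
    simp only [ContinuousLinearMap.comp_id, ContinuousLinearMap.precompR_apply, map_sub, sub_apply,
      ContinuousLinearMap.compL_apply, smul_add, add_apply, smul_apply,
      ContinuousLinearMap.precompL_apply, ContinuousLinearMap.id_apply, sub_right_inj]
    rw [hsymm.eq h y, hsymm.eq h x]
    module
  have hsmall : (fun y => fderiv ℝ φ y - fderiv ℝ φ x - B (y - x)) =o[𝓝[ball x r] x]
      fun y => ‖y - x‖ ^ 1 := by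
    simpa using hB.isLittleO.norm_right.mono nhdsWithin_le_nhds
  have := (convex_ball x r).isLittleO_pow_succ (mem_ball_self hr) hderiv hsmall
  simpa [nhdsWithin_eq_nhds.2 (ball_mem_nhds x hr)] using this

theorem isBigO_id_of_isLittleO_sub_smul {l : Filter ℝ} {k : ℝ → E} {v : E}
    (hk : (fun t => k t - t • v) =o[l] id) : k =O[l] id :=
  (hk.isBigO.add (.of_bound ‖v‖ (.of_forall fun t => by simp [norm_smul, mul_comm]))).congr_left
    fun t => sub_add_cancel _ _

theorem ContinuousLinearMap.isLittleO_apply_apply_sub_sq (B : E →L[ℝ] E →L[ℝ] F)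
    {l : Filter ℝ} {k : ℝ → E} {v : E} (hk : (fun t => k t - t • v) =o[l] id) :
    (fun t => B (k t) (k t) - t ^ 2 • B v v) =o[l] fun t => t ^ 2 := by
  have hB₁ : (fun t => B (k t - t • v) (k t)) =o[l] fun t => t * t :=
    (B.isBoundedBilinearMap.isBigO_comp (f := fun p => B p.1 p.2)).trans_isLittleO
      (hk.norm_left.mul_isBigO (isBigO_id_of_isLittleO_sub_smul hk).norm_left)
  have hB₂ : (fun t => t • B v (k t - t • v)) =o[l] fun t => t * t :=
    (isBigO_refl id l).smul_isLittleO ((B v).isBigO_comp _ l |>.trans_isLittleO hk)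
  refine (hB₁.add hB₂).congr (fun t => ?_) fun t => (sq t).symm
  simp only [map_sub, map_smul, sub_apply, smul_apply, smul_sub, smul_smul, sq]
  abel

theorem ContDiffAt.isLittleO_comp_sub_taylor_two {φ : E → F} {x v w : E}
    (hφ : ContDiffAt ℝ 2 φ x) {l : Filter ℝ} (hl : l ≤ 𝓝 0) {γ : ℝ → E}
    (hγ : (fun t => γ t - (x + t • v + (t ^ 2 / 2) • w)) =o[l] fun t => t ^ 2) :
    (fun t => φ (γ t) - (φ x + t • fderiv ℝ φ x v +
      (t ^ 2 / 2) • (fderiv ℝ (fderiv ℝ φ) x v v + fderiv ℝ φ x w))) =o[l] fun t => t ^ 2 := by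
  set A := fderiv ℝ φ x
  set B := fderiv ℝ (fderiv ℝ φ) x
  have hsq : (fun t : ℝ => t ^ 2) =o[l] id := (isLittleO_pow_id one_lt_two).mono hl
  have hk : (fun t => (γ t - x) - t • v) =o[l] id := by
    have hw : (fun t : ℝ => (t ^ 2 / 2) • w) =O[l] fun t => t ^ 2 := .of_bound ‖w‖ <|
      .of_forall fun t => by simp [norm_smul]; nlinarith [norm_nonneg w, sq_nonneg t]
    exact ((hγ.trans hsq).add (hw.trans_isLittleO hsq)).congr_left fun t => by abel
  have hkO := isBigO_id_of_isLittleO_sub_smul hk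
  have hγx : Tendsto γ l (𝓝 x) :=
    tendsto_sub_nhds_zero_iff.1 (hkO.trans_tendsto (tendsto_id.mono_left hl))
  have htaylor := (hφ.isLittleO_sub_taylor_two.comp_tendsto hγx).trans_isBigO
    (hkO.norm_left.pow 2)
  have hlin := (A.isBigO_comp _ l).trans_isLittleO hγ
  have hquad := (B.isLittleO_apply_apply_sub_sq hk).const_smul_left (2 : ℝ)⁻¹
  refine ((htaylor.add hlin).add hquad).congr_left fun t => ?_
  simp only [Function.comp_apply, Pi.smul_apply, map_sub, map_add, map_smul, sub_apply]
  module

end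

theorem stmt_6_general {E F : Type*} [NormedAddCommGroup E] [NormedSpace ℝ E]
    [NormedAddCommGroup F] [NormedSpace ℝ F]
    (U : Set E) (hU : IsOpen U) (φ : E → F) (hφ : ContDiffOn ℝ 2 φ U)
    (S : Set E) (hSU : S ⊆ U) (s : E) (hs : s ∈ S) (v w : E)
    (hw : Tendsto
      (fun t : ℝ => (t ^ 2)⁻¹ * Metric.infDist (s + t • v + (t ^ 2 / 2) • w) S)
      (𝓝[>] (0 : ℝ)) (𝓝 0)) :
    Tendsto
      (fun t : ℝ => (t ^ 2)⁻¹ * Metric.infDist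
        (φ s + t • fderiv ℝ φ s v +
          (t ^ 2 / 2) • (iteratedFDeriv ℝ 2 φ s ![v, v] + fderiv ℝ φ s w))
        (φ '' S))
      (𝓝[>] (0 : ℝ)) (𝓝 0) := by
  obtain ⟨γ, hγS, hγ⟩ := exists_mem_isLittleO_sub_of_tendsto_infDist ⟨s, hs⟩ hw
  have hφs : ContDiffAt ℝ 2 φ s := hφ.contDiffAt (hU.mem_nhds (hSU hs))
  rw [iteratedFDeriv_two_apply]
  exact tendsto_inv_sq_mul_infDist_of_isLittleO (fun t ht => mem_image_of_mem φ (hγS t ht))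
    (hφs.isLittleO_comp_sub_taylor_two nhdsWithin_le_nhds hγ)

/-- Chart-independence of the second-order adjacent cone under `C²` changes of coordinates: if
`φ` is `C²` on an open set `U`, `S ⊆ U`, `s ∈ S`, and `w` is second-order adjacent tangent to `S`
at `s` with associated direction `v`, then `D²φ(s)(v,v) + Dφ(s)w` is second-order adjacent
tangent to `φ(S)` at `φ(s)` with associated direction `Dφ(s)v`. -/
theorem stmt_6 {E F : Type*} [NormedAddCommGroup E] [NormedSpace ℝ E] [CompleteSpace E]
    [NormedAddCommGroup F] [NormedSpace ℝ F] [CompleteSpace F]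
    (U : Set E) (hU : IsOpen U) (φ : E → F) (hφ : ContDiffOn ℝ 2 φ U)
    (S : Set E) (hSU : S ⊆ U) (s : E) (hs : s ∈ S) (v w : E)
    (hw : Tendsto
      (fun t : ℝ => (t ^ 2)⁻¹ * Metric.infDist (s + t • v + (t ^ 2 / 2) • w) S)
      (𝓝[>] (0 : ℝ)) (𝓝 0)) :
    Tendsto
      (fun t : ℝ => (t ^ 2)⁻¹ * Metric.infDist
        (φ s + t • fderiv ℝ φ s v +
          (t ^ 2 / 2) • (iteratedFDeriv ℝ 2 φ s ![v, v] + fderiv ℝ φ s w))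
        (φ '' S))
      (𝓝[>] (0 : ℝ)) (𝓝 0) :=
  stmt_6_general U hU φ hφ S hSU s hs v w hw
end

section
/- Let E be a real Banach space, F₁ ⊆ E a closed linear subspace, s ∈ F₁, and f, e ∈ E. Then e is second-order adjacent tangent to F₁ at s with associated direction f (i.e. t⁻² · dist(s + t·f + (t²/2)·e, F₁) → 0 as t → 0⁺) if and only if f ∈ F₁ and e ∈ F₁. (This is the linear-chart form of the lemma identifying second-order adjacent tangent vectors of a C² submanifold with tangent vectors of its tangent bundle.) -/
open Filter Topology Set

/-! The distance to `F₁` is the quotient norm of `E ⧸ F₁`, which is a normed space because `F₁`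
is closed; there the curve becomes `t • f̄ + (t² / 2) • ē`, since `s̄ = 0`. For `t > 0`,
`t⁻² ‖t • u + (t² / 2) • v‖ = t⁻¹ ‖u + (t / 2) • v‖`, so the limit `0` forces `u = 0`, after
which the quotient is the constant `‖v‖ / 2`. -/

theorem Submodule.infDist_eq_norm_mkQ {R M : Type*} [Ring R] [SeminormedAddCommGroup M]
    [Module R M] (S : Submodule R M) (x : M) : Metric.infDist x S = ‖S.mkQ x‖ :=
  (QuotientAddGroup.norm_mk (S := S.toAddSubgroup) x).symm

section QuadraticCurve

variable {V : Type*} [NormedAddCommGroup V] [NormedSpace ℝ V]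

theorem sq_inv_mul_norm_smul_add_sq_smul {t : ℝ} (ht : 0 < t) (u v : V) :
    (t ^ 2)⁻¹ * ‖t • u + (t ^ 2 / 2) • v‖ = t⁻¹ * ‖u + (t / 2) • v‖ := by
  have hcurve : t • u + (t ^ 2 / 2) • v = t • (u + (t / 2) • v) := by
    rw [smul_add, smul_smul]
    ring_nf
  rw [hcurve, norm_smul, Real.norm_of_nonneg ht.le]
  field_simp

theorem tendsto_sq_inv_mul_norm_smul_add_sq_smul_iff (u v : V) :
    Tendsto (fun t : ℝ => (t ^ 2)⁻¹ * ‖t • u + (t ^ 2 / 2) • v‖) (𝓝[>] 0) (𝓝 0) ↔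
      u = 0 ∧ v = 0 := by
  constructor
  · intro h
    have hpos : ∀ᶠ t : ℝ in 𝓝[>] 0, 0 < t := self_mem_nhdsWithin
    have hto_zero : Tendsto (fun t : ℝ => ‖u + (t / 2) • v‖) (𝓝[>] 0) (𝓝 0) := by
      have hmul := (tendsto_id.mono_left (nhdsWithin_le_nhds (s := Ioi (0 : ℝ)))).mul h
      rw [zero_mul] at hmul
      refine hmul.congr' ?_
      filter_upwards [hpos] with t ht
      rw [id, sq_inv_mul_norm_smul_add_sq_smul ht, ← mul_assoc, mul_inv_cancel₀ ht.ne', one_mul]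
    have hto_norm : Tendsto (fun t : ℝ => ‖u + (t / 2) • v‖) (𝓝[>] 0) (𝓝 ‖u‖) := by
      have hcont : Continuous fun t : ℝ => ‖u + (t / 2) • v‖ := by fun_prop
      simpa using (hcont.tendsto 0).mono_left nhdsWithin_le_nhds
    have hu : u = 0 := norm_eq_zero.mp (tendsto_nhds_unique hto_norm hto_zero)
    subst hu
    have hconst : Tendsto (fun _ : ℝ => ‖v‖ / 2) (𝓝[>] 0) (𝓝 0) := by
      refine h.congr' ?_
      filter_upwards [hpos] with t ht
      rw [sq_inv_mul_norm_smul_add_sq_smul ht, zero_add, norm_smul,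
        Real.norm_of_nonneg (by positivity)]
      field_simp
    have hv : ‖v‖ / 2 = 0 := tendsto_nhds_unique tendsto_const_nhds hconst
    exact ⟨rfl, norm_eq_zero.mp (by linarith)⟩
  · rintro ⟨rfl, rfl⟩
    simp

end QuadraticCurve

theorem stmt_8_general {E : Type*} [NormedAddCommGroup E] [NormedSpace ℝ E]
    (F₁ : Submodule ℝ E) (hF₁ : IsClosed (F₁ : Set E)) (s : E) (hs : s ∈ F₁) (f e : E) :
    Tendsto
      (fun t : ℝ => (t ^ 2)⁻¹ * Metric.infDist (s + t • f + (t ^ 2 / 2) • e) (F₁ : Set E))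
      (𝓝[>] (0 : ℝ)) (𝓝 0) ↔ f ∈ F₁ ∧ e ∈ F₁ := by
  have hdist : ∀ t : ℝ, Metric.infDist (s + t • f + (t ^ 2 / 2) • e) (F₁ : Set E) =
      ‖t • F₁.mkQ f + (t ^ 2 / 2) • F₁.mkQ e‖ := fun t => by
    rw [Submodule.infDist_eq_norm_mkQ]
    simp [(Submodule.Quotient.mk_eq_zero F₁).2 hs]
  simp only [hdist, tendsto_sq_inv_mul_norm_smul_add_sq_smul_iff, Submodule.mkQ_apply,
    Submodule.Quotient.mk_eq_zero]

/-- For a closed linear subspace `F₁` of a real Banach space `E` and `s ∈ F₁`, a vector `e` is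
second-order adjacent tangent to `F₁` at `s` with associated direction `f` if and only if
`f ∈ F₁` and `e ∈ F₁`. -/
theorem stmt_8 {E : Type*} [NormedAddCommGroup E] [NormedSpace ℝ E] [CompleteSpace E]
    (F₁ : Submodule ℝ E) (hF₁ : IsClosed (F₁ : Set E)) (s : E) (hs : s ∈ F₁) (f e : E) :
    Tendsto
      (fun t : ℝ => (t ^ 2)⁻¹ * Metric.infDist (s + t • f + (t ^ 2 / 2) • e) (F₁ : Set E))
      (𝓝[>] (0 : ℝ)) (𝓝 0) ↔ f ∈ F₁ ∧ e ∈ F₁ :=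
  stmt_8_general F₁ hF₁ s hs f e
end

section
/- Let S₂ : E × E → E be continuously differentiable (C¹) and let F₁ ⊆ E be a closed linear subspace. Then the following are equivalent: (a) S₂(x, v) ∈ F₁ for all x, v ∈ F₁; (b) every geodesic g : I → E of S₂ (I an open interval containing 0) with g(0) ∈ F₁ and g'(0) ∈ F₁ satisfies g(t) ∈ F₁ for all t ∈ I. (This is the linear-chart form of the theorem that a closed submanifold is totally geodesic if and only if its admissible set equals its tangent bundle F₁ × F₁.) -/
/-!
Write `u = (g, g')`, an integral curve of the `C¹` vector field `V (x, v) = (v, S₂ (x, v))`, which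
maps `W = F₁ × F₁` into itself when (a) holds. Near a point of `W`, the Lipschitz bound on `V`
gives `‖w'‖ ≤ C ‖w‖` for the image `w` of `u` in `(E × E) ⧸ W`, i.e. for the distance from `u` to
`W`; by Grönwall `w` stays zero, so the times at which `u ∈ W` form an open and closed subset of
the interval. Conversely, the geodesic with initial data `(x, v) ∈ F₁ × F₁` stays in the closed
subspace `F₁`, hence so do its first two derivatives, and `g'' 0 = S₂ (x, v)`.
-/

open Filter Topology Set
open scoped NNReal

section Gronwall

variable {Q : Type*} [NormedAddCommGroup Q] [NormedSpace ℝ Q] {w w' : ℝ → Q} {K : ℝ}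

theorem eq_zero_on_Icc_of_norm_deriv_le {a b : ℝ}
    (hw : ∀ t ∈ Icc a b, HasDerivAt w (w' t) t) (hbound : ∀ t ∈ Icc a b, ‖w' t‖ ≤ K * ‖w t‖)
    (ha : w a = 0) : ∀ t ∈ Icc a b, w t = 0 := by
  have hgronwall := norm_le_gronwallBound_of_norm_deriv_right_le
    (fun t ht ↦ (hw t ht).continuousAt.continuousWithinAt)
    (fun t ht ↦ (hw t (Ico_subset_Icc_self ht)).hasDerivWithinAt) (δ := 0) (by simp [ha])
    (ε := 0) (fun t ht ↦ by simpa using hbound t (Ico_subset_Icc_self ht))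
  intro t ht
  simpa [gronwallBound_ε0_δ0] using hgronwall t ht

-- Run the forward estimate on both sides of `t₀`, backwards in time via `t ↦ w (-t)`.
theorem eventually_eq_zero_of_norm_deriv_le {t₀ : ℝ}
    (h : ∀ᶠ t in 𝓝 t₀, HasDerivAt w (w' t) t ∧ ‖w' t‖ ≤ K * ‖w t‖) (h₀ : w t₀ = 0) :
    ∀ᶠ t in 𝓝 t₀, w t = 0 := by
  obtain ⟨ε, hε, hball⟩ := Metric.nhds_basis_closedBall.mem_iff.1 h
  replace hball : ∀ t ∈ Icc (t₀ - ε) (t₀ + ε), HasDerivAt w (w' t) t ∧ ‖w' t‖ ≤ K * ‖w t‖ :=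
    fun t ht ↦ hball (Real.closedBall_eq_Icc ▸ ht)
  have hfwd := eq_zero_on_Icc_of_norm_deriv_le (b := t₀ + ε)
    (fun t ht ↦ (hball t ⟨by linarith [ht.1], ht.2⟩).1)
    (fun t ht ↦ (hball t ⟨by linarith [ht.1], ht.2⟩).2) h₀
  have hbwd := eq_zero_on_Icc_of_norm_deriv_le (w := fun t ↦ w (-t))
    (w' := fun t ↦ -w' (-t)) (a := -t₀) (b := -t₀ + ε) (K := K)
    (fun t ht ↦ by
      simpa [Function.comp_def] using
        ((hball (-t) ⟨by linarith [ht.2], by linarith [ht.1]⟩).1.scomp t (hasDerivAt_neg t)))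
    (fun t ht ↦ by simpa using (hball (-t) ⟨by linarith [ht.2], by linarith [ht.1]⟩).2)
    (by simpa using h₀)
  filter_upwards [Icc_mem_nhds (by linarith : t₀ - ε < t₀) (by linarith : t₀ < t₀ + ε)]
    with t ht
  rcases le_total t₀ t with hle | hle
  · exact hfwd t ⟨hle, ht.2⟩
  · simpa using hbwd (-t) ⟨by linarith, by linarith [ht.1]⟩

end Gronwall

namespace Submodule

variable {E : Type*} [NormedAddCommGroup E] [NormedSpace ℝ E] {W : Submodule ℝ E}
  {V : E → E} {u : ℝ → E}

theorem mem_of_hasDerivAt_of_eventually_mem (hW : IsClosed (W : Set E)) {f : ℝ → E} {f' : E}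
    {t : ℝ} (hf : HasDerivAt f f' t) (hmem : ∀ᶠ s in 𝓝 t, f s ∈ W) : f' ∈ W := by
  have hslope : ∀ᶠ s in 𝓝[≠] t, slope f t s ∈ (W : Set E) := by
    filter_upwards [nhdsWithin_le_nhds hmem] with s hs
    exact W.smul_mem _ (W.sub_mem hs hmem.self_of_nhds)
  exact hW.mem_of_tendsto (hasDerivAt_iff_tendsto_slope.1 hf) hslope

-- For a representative `m` of `y` modulo `W` with `‖m‖ < 2 ‖y‖_{E ⧸ W}`, the point `y - m` lies
-- in `W`, and `V y ≡ V y - V (y - m)` modulo `W`.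
theorem eventually_norm_mk_apply_le [IsClosed (W : Set E)]
    (hVW : ∀ p ∈ W, V p ∈ W) {p : E} (hp : p ∈ W) {K : ℝ≥0} {s : Set E} (hs : s ∈ 𝓝 p)
    (hV : LipschitzOnWith K V s) :
    ∀ᶠ y in 𝓝 p, ‖(Quotient.mk (V y) : E ⧸ W)‖ ≤ 2 * K * ‖(Quotient.mk y : E ⧸ W)‖ := by
  obtain ⟨r, hr, hball⟩ := Metric.mem_nhds_iff.1 hs
  filter_upwards [Metric.ball_mem_nhds p (by positivity : 0 < r / 4)] with y hy
  rw [Metric.mem_ball, dist_eq_norm] at hy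
  rcases eq_or_ne (Quotient.mk y : E ⧸ W) 0 with hy0 | hy0
  · rw [hy0, (Quotient.mk_eq_zero W).2 (hVW y ((Quotient.mk_eq_zero W).1 hy0))]
    simp
  obtain ⟨m, hm, hm_lt⟩ := Quotient.norm_mk_lt (Quotient.mk y : E ⧸ W) (norm_pos_iff.2 hy0)
  have hmk_le : ‖(Quotient.mk y : E ⧸ W)‖ ≤ ‖y - p‖ := by
    simpa [(Quotient.mk_eq_zero W).2 hp] using Quotient.norm_mk_le W (y - p)
  have hz : y - m ∈ W := by
    rw [← Quotient.mk_eq_zero W, Quotient.mk_sub, hm, sub_self]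
  have hz_ball : y - m ∈ Metric.ball p r := by
    rw [Metric.mem_ball, dist_eq_norm]
    calc ‖y - m - p‖ ≤ ‖y - p‖ + ‖m‖ := by
          rw [sub_right_comm]; exact norm_sub_le _ _
      _ < r := by linarith
  have hy_ball : y ∈ Metric.ball p r := by
    rw [Metric.mem_ball, dist_eq_norm]; linarith
  calc ‖(Quotient.mk (V y) : E ⧸ W)‖ = ‖(Quotient.mk (V y - V (y - m)) : E ⧸ W)‖ := by
        rw [Quotient.mk_sub, (Quotient.mk_eq_zero W).2 (hVW _ hz), sub_zero]
    _ ≤ ‖V y - V (y - m)‖ := Quotient.norm_mk_le W _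
    _ ≤ K * ‖m‖ := by
        simpa [dist_eq_norm] using hV.dist_le_mul y (hball hy_ball) (y - m) (hball hz_ball)
    _ ≤ K * (2 * ‖(Quotient.mk y : E ⧸ W)‖) := by gcongr; linarith
    _ = 2 * K * ‖(Quotient.mk y : E ⧸ W)‖ := by ring

theorem eventually_mem_of_hasDerivAt [IsClosed (W : Set E)] (hV : LocallyLipschitz V)
    (hVW : ∀ p ∈ W, V p ∈ W) {t₀ : ℝ} (hu : ∀ᶠ t in 𝓝 t₀, HasDerivAt u (V (u t)) t)
    (hut₀ : u t₀ ∈ W) : ∀ᶠ t in 𝓝 t₀, u t ∈ W := by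
  obtain ⟨K, s, hs, hVs⟩ := hV (u t₀)
  have hbound := hu.self_of_nhds.continuousAt.eventually
    (eventually_norm_mk_apply_le hVW hut₀ hs hVs)
  have hw : ∀ᶠ t in 𝓝 t₀, W.mkQL (u t) = 0 := by
    refine eventually_eq_zero_of_norm_deriv_le (w' := fun t ↦ W.mkQL (V (u t))) (K := 2 * K) ?_
      (by simpa using hut₀)
    filter_upwards [hu, hbound] with t hut hbt
    exact ⟨W.mkQL.hasFDerivAt.comp_hasDerivAt t hut, hbt⟩
  filter_upwards [hw] with t ht
  simpa using ht

theorem mapsTo_of_forall_hasDerivAt (hW : IsClosed (W : Set E)) (hV : LocallyLipschitz V)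
    (hVW : ∀ p ∈ W, V p ∈ W) {I : Set ℝ} (hI : IsOpen I) (hI' : IsPreconnected I)
    (hu : ∀ t ∈ I, HasDerivAt u (V (u t)) t) {t₀ : ℝ} (ht₀ : t₀ ∈ I) (hut₀ : u t₀ ∈ W) :
    MapsTo u I W := by
  set A := {t ∈ I | u t ∈ W}
  have hA : IsOpen A := isOpen_iff_mem_nhds.2 fun t ⟨ht, hut⟩ ↦ by
    filter_upwards [hI.mem_nhds ht,
      eventually_mem_of_hasDerivAt hV hVW (eventually_of_mem (hI.mem_nhds ht) hu) hut]
      with s hs hus using ⟨hs, hus⟩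
  have hIA : I ⊆ A := hI'.subset_of_closure_inter_subset hA ⟨t₀, ht₀, ht₀, hut₀⟩
    fun t ⟨htA, ht⟩ ↦ ⟨ht, hW.closure_subset <|
      (hu t ht).continuousAt.continuousWithinAt.mem_closure_image htA |>
        closure_mono (image_subset_iff.2 fun _ hs ↦ hs.2)⟩
  exact fun t ht ↦ (hIA ht).2

end Submodule

section SecondOrder

variable {E : Type*} [NormedAddCommGroup E] [NormedSpace ℝ E]

theorem ContDiffOn.hasDerivAt_and_hasDerivAt_deriv {g : ℝ → E} {I : Set ℝ}
    (hg : ContDiffOn ℝ 2 g I) (hI : IsOpen I) {t : ℝ} (ht : t ∈ I) :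
    HasDerivAt g (deriv g t) t ∧ HasDerivAt (deriv g) (deriv (deriv g) t) t := by
  rw [show (2 : WithTop ℕ∞) = 1 + 1 from rfl, contDiffOn_succ_iff_deriv_of_isOpen hI] at hg
  exact ⟨(hg.1.differentiableAt (hI.mem_nhds ht)).hasDerivAt,
    ((hg.2.2.differentiableOn one_ne_zero).differentiableAt (hI.mem_nhds ht)).hasDerivAt⟩

theorem contDiffOn_succ_of_forall_hasDerivAt {V : E → E} {n : ℕ} (hV : ContDiff ℝ n V)
    {J : Set ℝ} (hJ : IsOpen J) {f : ℝ → E} (hf : ∀ t ∈ J, HasDerivAt f (V (f t)) t) :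
    ContDiffOn ℝ (n + 1) f J := by
  have hdiff : DifferentiableOn ℝ f J := fun t ht ↦
    (hf t ht).differentiableAt.differentiableWithinAt
  have hderiv : EqOn (deriv f) (V ∘ f) J := fun t ht ↦ (hf t ht).deriv
  induction n with
  | zero =>
    rw [contDiffOn_succ_iff_deriv_of_isOpen hJ]
    exact ⟨hdiff, by simp,
      (hV.comp_contDiffOn (contDiffOn_zero.2 hdiff.continuousOn)).congr hderiv⟩
  | succ n ih =>
    rw [Nat.cast_succ, contDiffOn_succ_iff_deriv_of_isOpen hJ]
    exact ⟨hdiff, by simp, (hV.comp_contDiffOn (ih hV.of_succ)).congr hderiv⟩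

end SecondOrder

theorem exists_forall_mem_Ioo_deriv_deriv_eq {E : Type*} [NormedAddCommGroup E]
    [NormedSpace ℝ E] [CompleteSpace E] {S₂ : E × E → E} (hS₂ : ContDiff ℝ 1 S₂) (x v : E) :
    ∃ ε > (0 : ℝ), ∃ g : ℝ → E, ContDiffOn ℝ 2 g (Ioo (-ε) ε) ∧
      (∀ t ∈ Ioo (-ε) ε, deriv (deriv g) t = S₂ (g t, deriv g t)) ∧ g 0 = x ∧ deriv g 0 = v := by
  have hV : ContDiff ℝ 1 fun p : E × E ↦ (p.2, S₂ p) := contDiff_snd.prodMk hS₂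
  obtain ⟨f, hf0, ε, hε, hf⟩ :=
    hV.contDiffAt.exists_forall_mem_closedBall_exists_eq_forall_mem_Ioo_hasDerivAt₀ (x₀ := (x, v)) 0
  simp only [zero_sub, zero_add] at hf
  have hfst : ∀ t ∈ Ioo (-ε) ε, deriv (fun s ↦ (f s).1) t = (f t).2 := fun t ht ↦
    ((ContinuousLinearMap.fst ℝ E E).hasFDerivAt.comp_hasDerivAt t (hf t ht)).deriv
  have hsnd : ∀ t ∈ Ioo (-ε) ε, HasDerivAt (fun s ↦ (f s).2) (S₂ (f t)) t := fun t ht ↦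
    (ContinuousLinearMap.snd ℝ E E).hasFDerivAt.comp_hasDerivAt t (hf t ht)
  have h0 : (0 : ℝ) ∈ Ioo (-ε) ε := ⟨neg_neg_of_pos hε, hε⟩
  refine ⟨ε, hε, fun t ↦ (f t).1,
    contDiff_fst.comp_contDiffOn (contDiffOn_succ_of_forall_hasDerivAt hV isOpen_Ioo hf),
    fun t ht ↦ ?_, by simp [hf0], by rw [hfst 0 h0, hf0]⟩
  rw [(eventuallyEq_of_mem (isOpen_Ioo.mem_nhds ht) hfst).deriv_eq, (hsnd t ht).deriv, hfst t ht]

/-- Linear-chart form of the totally geodesic criterion: for a `C¹` spray second component `S₂`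
and a closed linear subspace `F₁ ⊆ E`, `S₂` maps `F₁ × F₁` into `F₁` if and only if every
geodesic of `S₂` starting in `F₁` with initial velocity in `F₁` remains in `F₁`. -/
theorem stmt_10 {E : Type*} [NormedAddCommGroup E] [NormedSpace ℝ E] [CompleteSpace E]
    (S₂ : E × E → E) (hS₂ : ContDiff ℝ 1 S₂)
    (F₁ : Submodule ℝ E) (hF₁ : IsClosed (F₁ : Set E)) :
    (∀ x ∈ F₁, ∀ v ∈ F₁, S₂ (x, v) ∈ F₁) ↔
      (∀ (g : ℝ → E) (I : Set ℝ), IsOpen I → I.OrdConnected → (0 : ℝ) ∈ I →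
        ContDiffOn ℝ 2 g I →
        (∀ t ∈ I, deriv (deriv g) t = S₂ (g t, deriv g t)) →
        g 0 ∈ F₁ → deriv g 0 ∈ F₁ → ∀ t ∈ I, g t ∈ F₁) := by
  constructor
  · intro hS₂F₁ g I hI hI' h0 hg hgeo hg0 hg0' t ht
    have hu : ∀ t ∈ I, HasDerivAt (fun s ↦ (g s, deriv g s)) (deriv g t, S₂ (g t, deriv g t)) t :=
      fun t ht ↦ hgeo t ht ▸ (hg.hasDerivAt_and_hasDerivAt_deriv hI ht).1.prodMk
        (hg.hasDerivAt_and_hasDerivAt_deriv hI ht).2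
    exact (Submodule.mapsTo_of_forall_hasDerivAt (W := F₁.prod F₁)
      (Submodule.prod_coe F₁ F₁ ▸ hF₁.prod hF₁) (contDiff_snd.prodMk hS₂).locallyLipschitz
      (fun p hp ↦ ⟨hp.2, hS₂F₁ _ hp.1 _ hp.2⟩) hI hI'.isPreconnected hu h0 ⟨hg0, hg0'⟩ ht).1
  · intro hgeodesic x hx v hv
    obtain ⟨ε, hε, g, hg, hgeo, hg0, hg0'⟩ := exists_forall_mem_Ioo_deriv_deriv_eq hS₂ x v
    have hJ : IsOpen (Ioo (-ε) ε) := isOpen_Ioo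
    have h0 : (0 : ℝ) ∈ Ioo (-ε) ε := ⟨neg_neg_of_pos hε, hε⟩
    have hgF₁ := hgeodesic g _ hJ ordConnected_Ioo h0 hg hgeo (hg0 ▸ hx) (hg0' ▸ hv)
    have hg'F₁ : ∀ t ∈ Ioo (-ε) ε, deriv g t ∈ F₁ := fun t ht ↦
      Submodule.mem_of_hasDerivAt_of_eventually_mem hF₁
        (hg.hasDerivAt_and_hasDerivAt_deriv hJ ht).1 (eventually_of_mem (hJ.mem_nhds ht) hgF₁)
    simpa [hgeo 0 h0, hg0, hg0'] using Submodule.mem_of_hasDerivAt_of_eventually_mem hF₁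
      (hg.hasDerivAt_and_hasDerivAt_deriv hJ h0).2 (eventually_of_mem (hJ.mem_nhds h0) hg'F₁)
end

section
/- Let E be a real Banach space, Σ ⊆ E nonempty and closed, and consider the flat spray on E (S₂ ≡ 0, geodesics are the affine lines t ↦ f + t·v). Let A := { (f, v) ∈ E × E : f ∈ Σ and lim_{t→0⁺} t⁻² · dist(f + t·v, Σ) = 0 } be the admissible set, and assume A is nonempty and closed in E × E. Then the following are equivalent: (a) for every (f, v) ∈ A and every t ≥ 0, f + t·v ∈ Σ (forward spray-invariance of Σ for the flat spray); (b) the flat spray, regarded as the vector field (f, v) ↦ (v, 0) on E × E, is adjacent tangent to A, i.e. for every (f, v) ∈ A, lim_{t→0⁺} t⁻¹ · dist_{E×E}((f + t·v, v), A) = 0. -/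
open Filter Topology Set

/-!
(a) ⇒ (b): admissibility of `(f, v)` is inherited by every `(f + t • v, v)`, `t ≥ 0`, when the
whole ray lies in `Σ`; so `A` is invariant under the flat flow `φₜ (f, v) = (f + t • v, v)` and
the distance in the tangency condition vanishes.

(b) ⇒ (a) is a Nagumo-type viability argument. Fix `p ∈ A`, `T ≥ 0`, `ε > 0` and consider the
pairs `(t, q)` with `t ∈ [0, T]`, `q ∈ A` and `dist q (φₜ p) ≤ ε (eᵗ - 1)`. Ordered by
`(t, q) ≤ (t', q')` iff `dist q q' ≤ K (t' - t)` for a large constant `K`, chains are Lipschitz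
graphs over their times, so by completeness they have upper bounds and Zorn's lemma gives a
maximal pair. If its time were `< T`, the tangency condition at it would produce a larger pair:
the weight `eᵗ - 1` absorbs the Lipschitz constant `1 + s` of `φₛ`. Hence the time is `T`, and
letting `ε → 0` gives `φ_T p ∈ A ⊆ Σ × E`.
-/

section LipschitzLE

variable {Y : Type*} [MetricSpace Y]

def LipschitzLE (K : ℝ) (a b : ℝ × Y) : Prop :=
  a.1 ≤ b.1 ∧ dist a.2 b.2 ≤ K * (b.1 - a.1)

theorem LipschitzLE.trans {K : ℝ} {a b c : ℝ × Y} (hab : LipschitzLE K a b)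
    (hbc : LipschitzLE K b c) : LipschitzLE K a c :=
  ⟨hab.1.trans hbc.1, by linarith [dist_triangle a.2 b.2 c.2, hab.2, hbc.2]⟩

theorem LipschitzLE.dist_le_abs {K : ℝ} {a b : ℝ × Y} (h : LipschitzLE K a b) :
    dist a.2 b.2 ≤ K * |b.1 - a.1| := by
  rw [abs_of_nonneg (sub_nonneg.2 h.1)]
  exact h.2

theorem IsChain.dist_le_abs_of_lipschitzLE {K : ℝ} {c : Set (ℝ × Y)}
    (hc : IsChain (LipschitzLE K) c) {a b : ℝ × Y} (ha : a ∈ c) (hb : b ∈ c) :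
    dist a.2 b.2 ≤ K * |b.1 - a.1| := by
  rcases eq_or_ne a b with rfl | hab
  · simp
  rcases hc ha hb hab with h | h
  · exact h.dist_le_abs
  · rw [dist_comm, abs_sub_comm]
    exact h.dist_le_abs

theorem IsChain.exists_lipschitzLE_upperBound [CompleteSpace Y] {K : ℝ} {X c : Set (ℝ × Y)}
    (hX : IsClosed X) (hcX : c ⊆ X) (hc : IsChain (LipschitzLE K) c) (hne : c.Nonempty)
    (hbdd : BddAbove (Prod.fst '' c)) : ∃ ub ∈ X, ∀ a ∈ c, LipschitzLE K a ub := by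
  set τ := sSup (Prod.fst '' c)
  have hle : ∀ a ∈ c, a.1 ≤ τ := fun a ha => le_csSup hbdd (mem_image_of_mem _ ha)
  obtain ⟨u, -, hu, huc⟩ := exists_seq_tendsto_sSup (hne.image Prod.fst) hbdd
  choose x hxc hxu using huc
  have ht : Tendsto (fun n => (x n).1) atTop (𝓝 τ) := by simpa only [hxu] using hu
  have hcauchy : CauchySeq fun n => (x n).2 := by
    refine Metric.cauchySeq_iff.2 fun δ hδ => ?_
    obtain ⟨N, hN⟩ := Metric.cauchySeq_iff.1 ht.cauchySeq (δ / (|K| + 1)) (by positivity)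
    refine ⟨N, fun m hm n hn => ?_⟩
    have htmn : |(x n).1 - (x m).1| < δ / (|K| + 1) := by
      rw [abs_sub_comm]; exact hN m hm n hn
    calc dist (x m).2 (x n).2 ≤ K * |(x n).1 - (x m).1| :=
          hc.dist_le_abs_of_lipschitzLE (hxc m) (hxc n)
      _ ≤ |K| * |(x n).1 - (x m).1| := mul_le_mul_of_nonneg_right (le_abs_self K) (abs_nonneg _)
      _ ≤ |K| * (δ / (|K| + 1)) := mul_le_mul_of_nonneg_left htmn.le (abs_nonneg K)
      _ < δ := by
        rw [mul_div_assoc', div_lt_iff₀ (by positivity)]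
        nlinarith [abs_nonneg K]
  obtain ⟨q, hq⟩ := cauchySeq_tendsto_of_complete hcauchy
  refine ⟨(τ, q), hX.mem_of_tendsto (ht.prodMk_nhds hq) (.of_forall fun n => hcX (hxc n)),
    fun a ha => ⟨hle a ha, ?_⟩⟩
  have hlim : Tendsto (fun n => K * |(x n).1 - a.1|) atTop (𝓝 (K * (τ - a.1))) := by
    rw [← abs_of_nonneg (sub_nonneg.2 (hle a ha))]
    exact ((ht.sub_const a.1).abs).const_mul K
  exact le_of_tendsto_of_tendsto' (tendsto_const_nhds.dist hq) hlim
    fun n => hc.dist_le_abs_of_lipschitzLE ha (hxc n)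

theorem exists_maximal_lipschitzLE [CompleteSpace Y] (K : ℝ) {X : Set (ℝ × Y)}
    (hX : IsClosed X) (hbdd : BddAbove (Prod.fst '' X)) (hne : X.Nonempty) :
    ∃ m ∈ X, ∀ a ∈ X, LipschitzLE K m a → a.1 ≤ m.1 := by
  have : Nonempty X := hne.to_subtype
  have hchains : ∀ c : Set X, IsChain (fun a b : X => LipschitzLE K a.1 b.1) c → c.Nonempty →
      ∃ ub : X, ∀ a ∈ c, LipschitzLE K a.1 ub.1 := by
    intro c hc hcne
    obtain ⟨ub, hubX, hub⟩ := (hc.image_of_map_rel _ (LipschitzLE K) Subtype.val fun _ _ h => h)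
      |>.exists_lipschitzLE_upperBound hX (image_subset_iff.2 fun a _ => a.2) (hcne.image _)
        (hbdd.mono (image_mono (image_subset_iff.2 fun a _ => a.2)))
    exact ⟨⟨ub, hubX⟩, fun a ha => hub a (mem_image_of_mem _ ha)⟩
  obtain ⟨m, hm⟩ := exists_maximal_of_nonempty_chains_bounded hchains fun hab hbc => hab.trans hbc
  exact ⟨m, m.2, fun a ha h => (hm ⟨a, ha⟩ h).1⟩

end LipschitzLE

theorem exists_dist_lt_of_tendsto_inv_mul_infDist {Y : Type*} [MetricSpace Y] {g : ℝ → Y}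
    {A : Set Y} (hA : A.Nonempty)
    (h : Tendsto (fun s => s⁻¹ * Metric.infDist (g s) A) (𝓝[>] 0) (𝓝 0))
    {ε δ : ℝ} (hε : 0 < ε) (hδ : 0 < δ) : ∃ s ∈ Ioo 0 δ, ∃ y ∈ A, dist (g s) y < ε * s := by
  have hsmall : ∀ᶠ s in 𝓝[>] (0 : ℝ), s ∈ Ioo 0 δ := Ioo_mem_nhdsGT hδ
  obtain ⟨s, hsε, hsδ⟩ := ((h.eventually_lt_const hε).and hsmall).exists
  refine ⟨s, hsδ, (Metric.infDist_lt_iff hA).1 ?_⟩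
  rwa [inv_mul_lt_iff₀ hsδ.1, mul_comm] at hsε

section FlatFlow

variable {E : Type*} [NormedAddCommGroup E] [NormedSpace ℝ E]

def flatFlow (t : ℝ) (p : E × E) : E × E := (p.1 + t • p.2, p.2)

theorem flatFlow_flatFlow (s t : ℝ) (p : E × E) :
    flatFlow s (flatFlow t p) = flatFlow (t + s) p := by
  simp only [flatFlow, add_smul, add_assoc]

theorem continuous_flatFlow : Continuous fun x : ℝ × (E × E) => flatFlow x.1 x.2 := by
  unfold flatFlow; fun_prop

theorem dist_flatFlow_self (s : ℝ) (p : E × E) : dist (flatFlow s p) p = |s| * ‖p.2‖ := by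
  rw [flatFlow, Prod.dist_eq, dist_self]
  dsimp only
  rw [dist_self_add_left, norm_smul, Real.norm_eq_abs]
  exact max_eq_left (by positivity)

theorem norm_flatFlow_le {s : ℝ} (hs : 0 ≤ s) (p : E × E) : ‖flatFlow s p‖ ≤ (1 + s) * ‖p‖ := by
  have h1 := norm_fst_le p
  have h2 := norm_snd_le p
  refine max_le ?_ (show ‖p.2‖ ≤ (1 + s) * ‖p‖ by nlinarith [norm_nonneg p])
  calc ‖p.1 + s • p.2‖ ≤ ‖p.1‖ + s * ‖p.2‖ := by
        grw [norm_add_le, norm_smul, Real.norm_of_nonneg hs]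
    _ ≤ (1 + s) * ‖p‖ := by nlinarith

theorem dist_flatFlow_flatFlow_le {s : ℝ} (hs : 0 ≤ s) (p q : E × E) :
    dist (flatFlow s p) (flatFlow s q) ≤ (1 + s) * dist p q := by
  have hsub : flatFlow s p - flatFlow s q = flatFlow s (p - q) := by
    simp only [flatFlow, Prod.mk_sub_mk, Prod.fst_sub, Prod.snd_sub, smul_sub]
    abel_nf
  rw [dist_eq_norm, dist_eq_norm, hsub]
  exact norm_flatFlow_le hs _

theorem exists_mem_dist_flatFlow_le [CompleteSpace E] {A : Set (E × E)} (hA : IsClosed A)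
    (htang : ∀ q ∈ A, Tendsto (fun s => s⁻¹ * Metric.infDist (flatFlow s q) A) (𝓝[>] 0) (𝓝 0))
    {p : E × E} (hp : p ∈ A) {T ε : ℝ} (hT : 0 ≤ T) (hε : 0 < ε) :
    ∃ q ∈ A, dist q (flatFlow T p) ≤ ε * (Real.exp T - 1) := by
  set V := ‖p.2‖ + ε * (Real.exp T - 1)
  set X : Set (ℝ × (E × E)) :=
    {a | a.1 ∈ Icc 0 T ∧ a.2 ∈ A ∧ dist a.2 (flatFlow a.1 p) ≤ ε * (Real.exp a.1 - 1)}
  have hXc : IsClosed X := by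
    have hcont : Continuous fun a : ℝ × (E × E) => dist a.2 (flatFlow a.1 p) :=
      continuous_snd.dist (continuous_flatFlow.comp (continuous_fst.prodMk continuous_const))
    exact (isClosed_Icc.preimage continuous_fst).inter
      ((hA.preimage continuous_snd).inter (isClosed_le hcont (by fun_prop)))
  have hbdd : BddAbove (Prod.fst '' X) := ⟨T, by rintro _ ⟨a, ha, rfl⟩; exact ha.1.2⟩
  have h0 : ((0 : ℝ), p) ∈ X := ⟨⟨le_rfl, hT⟩, hp, by simp [flatFlow]⟩
  obtain ⟨⟨τ, q⟩, ⟨hτ, hqA, hq⟩, hmax⟩ := exists_maximal_lipschitzLE (ε + V) hXc hbdd ⟨_, h0⟩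
  suffices τ = T from this ▸ ⟨q, hqA, hq⟩
  by_contra hτT
  have hτlt : τ < T := lt_of_le_of_ne hτ.2 hτT
  obtain ⟨s, ⟨hs, hsT⟩, q', hq'A, hq'⟩ :=
    exists_dist_lt_of_tendsto_inv_mul_infDist ⟨p, hp⟩ (htang q hqA) hε (sub_pos.2 hτlt)
  have hexp : ε * (Real.exp τ - 1) ≤ ε * (Real.exp T - 1) := by gcongr
  have hspeed : ‖q.2‖ ≤ V := by
    have : ‖q.2 - p.2‖ ≤ dist q (flatFlow τ p) := by
      rw [dist_eq_norm]; exact norm_snd_le (q - flatFlow τ p)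
    linarith [norm_le_insert' q.2 p.2]
  have hnew : (τ + s, q') ∈ X := by
    refine ⟨⟨by linarith [hτ.1], by linarith⟩, hq'A, ?_⟩
    have hgrowth : (1 + s) * Real.exp τ ≤ Real.exp (τ + s) := by
      rw [Real.exp_add, mul_comm]
      gcongr
      linarith [Real.add_one_le_exp s]
    calc dist q' (flatFlow (τ + s) p)
        ≤ dist q' (flatFlow s q) + dist (flatFlow s q) (flatFlow s (flatFlow τ p)) := by
          rw [flatFlow_flatFlow]; exact dist_triangle _ _ _
      _ ≤ ε * s + (1 + s) * (ε * (Real.exp τ - 1)) := by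
          rw [dist_comm]
          gcongr
          exact (dist_flatFlow_flatFlow_le hs.le _ _).trans (by gcongr)
      _ ≤ ε * (Real.exp (τ + s) - 1) := by nlinarith
  have hstep : LipschitzLE (ε + V) (τ, q) (τ + s, q') := by
    refine ⟨by linarith, ?_⟩
    calc dist q q' ≤ dist q (flatFlow s q) + dist (flatFlow s q) q' := dist_triangle _ _ _
      _ ≤ s * V + ε * s := by
          rw [dist_comm, dist_flatFlow_self, abs_of_pos hs]
          gcongr
      _ = (ε + V) * (τ + s - τ) := by ring
  linarith [hmax _ hnew hstep]

theorem flatFlow_mem_of_tendsto [CompleteSpace E] {A : Set (E × E)} (hA : IsClosed A)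
    (htang : ∀ q ∈ A, Tendsto (fun s => s⁻¹ * Metric.infDist (flatFlow s q) A) (𝓝[>] 0) (𝓝 0))
    {p : E × E} (hp : p ∈ A) {t : ℝ} (ht : 0 ≤ t) : flatFlow t p ∈ A := by
  have hsmall : Tendsto (fun ε => ε * (Real.exp t - 1)) (𝓝[>] 0) (𝓝 0) := by
    simpa using (tendsto_nhdsWithin_of_tendsto_nhds (tendsto_id (x := 𝓝 (0 : ℝ)))).mul_const
      (Real.exp t - 1)
  have hle : ∀ᶠ ε in 𝓝[>] (0 : ℝ), Metric.infDist (flatFlow t p) A ≤ ε * (Real.exp t - 1) := by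
    filter_upwards [self_mem_nhdsWithin] with ε hε
    obtain ⟨q, hqA, hq⟩ := exists_mem_dist_flatFlow_le hA htang hp ht hε
    exact (Metric.infDist_le_dist_of_mem hqA).trans (by rwa [dist_comm])
  exact (hA.mem_iff_infDist_zero ⟨p, hp⟩).2 <|
    le_antisymm (ge_of_tendsto hsmall hle) Metric.infDist_nonneg

end FlatFlow

theorem stmt_15_general {E : Type*} [NormedAddCommGroup E] [NormedSpace ℝ E] [CompleteSpace E]
    (T : Set E)
    (A : Set (E × E))
    (hA : A = {p : E × E | p.1 ∈ T ∧
      Tendsto (fun t : ℝ => (t ^ 2)⁻¹ * Metric.infDist (p.1 + t • p.2) T)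
        (𝓝[>] (0 : ℝ)) (𝓝 0)})
    (hAc : IsClosed A) :
    (∀ p ∈ A, ∀ t : ℝ, 0 ≤ t → p.1 + t • p.2 ∈ T) ↔
      (∀ p ∈ A,
        Tendsto (fun t : ℝ => t⁻¹ * Metric.infDist ((p.1 + t • p.2, p.2) : E × E) A)
          (𝓝[>] (0 : ℝ)) (𝓝 0)) := by
  constructor
  · intro hinv p hp
    have hray : ∀ r, 0 ≤ r → flatFlow r p ∈ A := by
      intro r hr
      rw [hA]
      refine ⟨hinv p hp r hr, tendsto_const_nhds.congr' ?_⟩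
      filter_upwards [self_mem_nhdsWithin] with s (hs : 0 < s)
      change 0 = (s ^ 2)⁻¹ * Metric.infDist (flatFlow s (flatFlow r p)).1 T
      have hmem : (flatFlow (r + s) p).1 ∈ T := hinv p hp _ (by linarith)
      rw [flatFlow_flatFlow, Metric.infDist_zero_of_mem hmem, mul_zero]
    refine tendsto_const_nhds.congr' ?_
    filter_upwards [self_mem_nhdsWithin] with s (hs : 0 < s)
    change 0 = s⁻¹ * Metric.infDist (flatFlow s p) A
    rw [Metric.infDist_zero_of_mem (hray s hs.le), mul_zero]
  · intro htang p hp t ht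
    have hAT : ∀ q ∈ A, q.1 ∈ T := fun q hq => (hA ▸ hq).1
    exact hAT _ (flatFlow_mem_of_tendsto hAc htang hp ht)

/-- Nagumo–Brezis characterization for the flat spray on a Banach space: for a nonempty closed
set `Σ ⊆ E` whose admissible set `A` is nonempty and closed, forward spray-invariance of `Σ`
(affine geodesics starting admissibly stay in `Σ`) is equivalent to adjacent tangency of the
flat spray, viewed as the vector field `(f, v) ↦ (v, 0)` on `E × E`, to `A`. -/
theorem stmt_15 {E : Type*} [NormedAddCommGroup E] [NormedSpace ℝ E] [CompleteSpace E]
    (T : Set E) (hT : T.Nonempty) (hTc : IsClosed T)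
    (A : Set (E × E))
    (hA : A = {p : E × E | p.1 ∈ T ∧
      Tendsto (fun t : ℝ => (t ^ 2)⁻¹ * Metric.infDist (p.1 + t • p.2) T)
        (𝓝[>] (0 : ℝ)) (𝓝 0)})
    (hAne : A.Nonempty) (hAc : IsClosed A) :
    (∀ p ∈ A, ∀ t : ℝ, 0 ≤ t → p.1 + t • p.2 ∈ T) ↔
      (∀ p ∈ A,
        Tendsto (fun t : ℝ => t⁻¹ * Metric.infDist ((p.1 + t • p.2, p.2) : E × E) A)
          (𝓝[>] (0 : ℝ)) (𝓝 0)) :=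
  stmt_15_general T A hA hAc
end

section
/- Let S₂ : E × E → E and let Σ ⊆ E be nonempty and closed. Then Σ is spray-invariant for S₂ if and only if the admissible set is invariant along geodesics: for every geodesic g : I → E of S₂ (0 ∈ I, I open) with (g(0), g'(0)) admissible, the pair (g(t), g'(t)) is admissible for all t ∈ I. (This is the linear-chart form of the theorem that a closed set is spray-invariant if and only if its admissible set is invariant under the geodesic flow.) -/
open Filter Topology Set

/-- A pair `(f, v)` is admissible for `(S₂, Σ)`: `f ∈ Σ` and
`t⁻² · dist(f + t•v + (t²/2)•S₂(f,v), Σ) → 0` as `t → 0⁺`. -/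
def Admissible {E : Type*} [NormedAddCommGroup E] [NormedSpace ℝ E]
    (S₂ : E × E → E) (T : Set E) (f v : E) : Prop :=
  f ∈ T ∧
    Filter.Tendsto
      (fun t : ℝ => (t ^ 2)⁻¹ *
        Metric.infDist (f + t • v + (t ^ 2 / 2) • S₂ (f, v)) T)
      (nhdsWithin (0 : ℝ) (Set.Ioi 0)) (nhds 0)

/-- `Σ` is spray-invariant for `S₂`: every geodesic `g : I → E` (I an open interval containing 0)
with admissible initial data `(g 0, g' 0)` stays in `Σ`. -/
def SprayInvariant {E : Type*} [NormedAddCommGroup E] [NormedSpace ℝ E]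
    (S₂ : E × E → E) (T : Set E) : Prop :=
  ∀ (g : ℝ → E) (I : Set ℝ), IsOpen I → I.OrdConnected → (0 : ℝ) ∈ I →
    ContDiffOn ℝ 2 g I →
    (∀ t ∈ I, deriv (deriv g) t = S₂ (g t, deriv g t)) →
    Admissible S₂ T (g 0) (deriv g 0) → ∀ t ∈ I, g t ∈ T

open Asymptotics

/- A geodesic that stays in `Σ` witnesses admissibility at each of its points: by second-order
Taylor expansion `g (t + s) = g t + s • g' t + (s²/2) • g'' t + o(s²)` with `g'' t = S₂ (g t, g' t)`,
and `g (t + s) ∈ Σ`. Conversely, admissibility of `(g t, g' t)` contains `g t ∈ Σ`. -/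

section

variable {E : Type*} [NormedAddCommGroup E] [NormedSpace ℝ E]

theorem Convex.isLittleO_sub_taylor_two {g g' : ℝ → E} {s : Set ℝ} {t : ℝ} {w : E}
    (hs : Convex ℝ s) (ht : t ∈ s) (hg : ∀ x ∈ s, HasDerivWithinAt g (g' x) s x)
    (hg' : HasDerivWithinAt g' w s t) :
    (fun x ↦ g x - g t - (x - t) • g' t - ((x - t) ^ 2 / 2) • w) =o[𝓝[s] t]
      fun x ↦ (x - t) ^ 2 := by
  have hderiv : ∀ x ∈ s, HasDerivWithinAt (fun x ↦ g x - (x - t) • g' t - ((x - t) ^ 2 / 2) • w)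
      (g' x - g' t - (x - t) • w) s x := by
    intro x hx
    have hlin : HasDerivAt (fun x : ℝ ↦ (x - t) • g' t) (g' t) x := by
      simpa using ((hasDerivAt_id x).sub_const t).smul_const (g' t)
    have hquad : HasDerivAt (fun x : ℝ ↦ ((x - t) ^ 2 / 2) • w) ((x - t) • w) x := by
      convert ((((hasDerivAt_id' x).sub_const t).fun_pow 2).div_const 2).smul_const w using 2
      ring
    exact ((hg x hx).sub hlin.hasDerivWithinAt).sub hquad.hasDerivWithinAt
  have hsmall : (fun x ↦ g' x - g' t - (x - t) • w) =o[𝓝[s] t] fun x ↦ (x - t) ^ 1 := by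
    simpa using hg'.isLittleO
  convert hs.isLittleO_pow_succ_real ht hderiv hsmall using 2 with x
  simp only [sub_self, zero_smul, ne_eq, OfNat.ofNat_ne_zero, not_false_eq_true, zero_pow,
    zero_div, sub_zero]
  abel

theorem admissible_of_isLittleO {S₂ : E × E → E} {T : Set E} {f v : E} {c : ℝ → E}
    (hf : f ∈ T) (hc : ∀ᶠ s in 𝓝[>] 0, c s ∈ T)
    (hcv : (fun s ↦ c s - (f + s • v + (s ^ 2 / 2) • S₂ (f, v))) =o[𝓝[>] 0] fun s ↦ s ^ 2) :
    Admissible S₂ T f v := by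
  refine ⟨hf, squeeze_zero' ?_ ?_ (hcv.norm_left.tendsto_div_nhds_zero)⟩
  · exact Eventually.of_forall fun s ↦ mul_nonneg (by positivity) Metric.infDist_nonneg
  · filter_upwards [hc] with s hs
    rw [inv_mul_eq_div, norm_sub_rev, ← dist_eq_norm]
    gcongr
    exact Metric.infDist_le_dist_of_mem hs

theorem admissible_of_geodesic_mapsTo {S₂ : E × E → E} {T : Set E} {g : ℝ → E} {I : Set ℝ}
    (hIo : IsOpen I) (hIc : I.OrdConnected) (hg : ContDiffOn ℝ 2 g I)
    (hgeo : ∀ t ∈ I, deriv (deriv g) t = S₂ (g t, deriv g t)) (hgT : MapsTo g I T)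
    {t : ℝ} (ht : t ∈ I) : Admissible S₂ T (g t) (deriv g t) := by
  have hg₁ : ∀ x ∈ I, HasDerivWithinAt g (deriv g x) I x := fun x hx ↦
    ((hg.differentiableOn (by norm_num)).differentiableAt (hIo.mem_nhds hx)).hasDerivAt
      |>.hasDerivWithinAt
  have hg₂ : HasDerivWithinAt (deriv g) (deriv (deriv g) t) I t :=
    (((hg.deriv_of_isOpen hIo (m := 1) (by norm_num)).differentiableOn (by norm_num))
      |>.differentiableAt (hIo.mem_nhds ht)).hasDerivAt.hasDerivWithinAt
  have htaylor := hIc.convex.isLittleO_sub_taylor_two ht hg₁ hg₂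
  rw [hIo.nhdsWithin_eq ht, hgeo t ht] at htaylor
  have hshift : Tendsto (t + ·) (𝓝[>] 0) (𝓝 t) :=
    (continuous_const_add t).tendsto' 0 t (add_zero t) |>.mono_left nhdsWithin_le_nhds
  refine admissible_of_isLittleO (c := fun s ↦ g (t + s)) (hgT ht)
    (hshift.eventually_mem (hIo.mem_nhds ht) |>.mono fun _ ↦ (hgT ·)) ?_
  convert htaylor.comp_tendsto hshift using 2 with s
  · simp only [Function.comp_apply, add_sub_cancel_left]
    abel
  · simp

end

theorem stmt_16_general {E : Type*} [NormedAddCommGroup E] [NormedSpace ℝ E]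
    (S₂ : E × E → E) (T : Set E) :
    SprayInvariant S₂ T ↔
      (∀ (g : ℝ → E) (I : Set ℝ), IsOpen I → I.OrdConnected → (0 : ℝ) ∈ I →
        ContDiffOn ℝ 2 g I →
        (∀ t ∈ I, deriv (deriv g) t = S₂ (g t, deriv g t)) →
        Admissible S₂ T (g 0) (deriv g 0) →
        ∀ t ∈ I, Admissible S₂ T (g t) (deriv g t)) := by
  constructor
  · intro hinv g I hIo hIc h0 hg hgeo hadm t ht
    exact admissible_of_geodesic_mapsTo hIo hIc hg hgeo (hinv g I hIo hIc h0 hg hgeo hadm) ht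
  · intro hadmInv g I hIo hIc h0 hg hgeo hadm t ht
    exact (hadmInv g I hIo hIc h0 hg hgeo hadm t ht).1

/-- A nonempty closed set `Σ` is spray-invariant for `S₂` if and only if the admissible set is
invariant along geodesics: for every geodesic with admissible initial data, `(g t, g' t)` is
admissible for all `t` in the domain. -/
theorem stmt_16 {E : Type*} [NormedAddCommGroup E] [NormedSpace ℝ E] [CompleteSpace E]
    (S₂ : E × E → E) (T : Set E) (hT : T.Nonempty) (hTc : IsClosed T) :
    SprayInvariant S₂ T ↔
      (∀ (g : ℝ → E) (I : Set ℝ), IsOpen I → I.OrdConnected → (0 : ℝ) ∈ I →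
        ContDiffOn ℝ 2 g I →
        (∀ t ∈ I, deriv (deriv g) t = S₂ (g t, deriv g t)) →
        Admissible S₂ T (g 0) (deriv g 0) →
        ∀ t ∈ I, Admissible S₂ T (g t) (deriv g t)) :=
  stmt_16_general S₂ T
end
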